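/- arXiv:2005.12185 — 6 statements merged into one kernel-verified Lean document; each statement's English description precedes it below -/
import Mathlib

section
/- The number of binary strings of length n in which every 1 has at least one neighboring 1 satisfies d_0 = 1, d_1 = 1, d_2 = 2, d_3 = 4, and d_n = 2 d_{n-1} - d_{n-2} + d_{n-3} for all n ≥ 4. -/
/-!
Track the bit to the left of a string: `MultusAfter c f` says `f` is multus when preceded by
the bit `c`. Peeling off the first bit gives `D (n + 2) = D (n + 1) + C n` and
`C (n + 1) = D n + C n` for the counts `D = multusAfterCount false` and
`C = multusAfterCount true`, and eliminating `C` yields the recurrence.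
-/

/-- A bitstring is multus if every 1 has at least one neighboring 1. -/
def Multus {n : ℕ} (f : Fin n → Bool) : Prop :=
  ∀ i : Fin n, f i = true →
    ∃ j : Fin n, (j.val = i.val + 1 ∨ j.val + 1 = i.val) ∧ f j = true

/-- Number of multus bitstrings of length `n`. -/
noncomputable def multusCount (n : ℕ) : ℕ := Nat.card {f : Fin n → Bool // Multus f}

theorem Nat.card_subtype_fin_succ {α : Type*} [Fintype α] {n : ℕ}
    (Q : (Fin (n + 1) → α) → Prop) :
    Nat.card {f : Fin (n + 1) → α // Q f} =
      ∑ a, Nat.card {f : Fin n → α // Q (Fin.cons a f)} := by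
  let e := ((Fin.consEquiv fun _ => α).subtypeEquiv fun p => Iff.rfl).symm.trans
    (Equiv.subtypeProdEquivSigmaSubtype fun a g => Q (Fin.cons a g))
  rw [Nat.card_congr e, Nat.card_sigma]

def MultusAfter (c : Bool) {n : ℕ} (f : Fin n → Bool) : Prop :=
  ∀ i : Fin n, f i = true →
    (i.val = 0 ∧ c = true) ∨
      ∃ j : Fin n, (j.val = i.val + 1 ∨ j.val + 1 = i.val) ∧ f j = true

theorem multus_iff_multusAfter_false {n : ℕ} (f : Fin n → Bool) :
    Multus f ↔ MultusAfter false f := by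
  simp [Multus, MultusAfter]

theorem multusAfter_zero (c : Bool) (f : Fin 0 → Bool) : MultusAfter c f :=
  fun i => i.elim0

theorem multusAfter_cons {n : ℕ} (c b : Bool) (f : Fin n → Bool) :
    MultusAfter c (Fin.cons b f) ↔
      (b = true → c = true ∨ ∃ j : Fin n, j.val = 0 ∧ f j = true) ∧ MultusAfter b f := by
  simp [MultusAfter, Fin.forall_fin_succ, Fin.exists_fin_succ]

noncomputable def multusAfterCount (c : Bool) (n : ℕ) : ℕ :=
  Nat.card {f : Fin n → Bool // MultusAfter c f}

theorem multusCount_eq_multusAfterCount_false (n : ℕ) :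
    multusCount n = multusAfterCount false n :=
  Nat.card_congr (Equiv.subtypeEquivRight multus_iff_multusAfter_false)

theorem multusAfterCount_zero (c : Bool) : multusAfterCount c 0 = 1 := by
  simp [multusAfterCount, multusAfter_zero]

theorem multusAfterCount_false_one : multusAfterCount false 1 = 1 := by
  simp [multusAfterCount, Nat.card_subtype_fin_succ, multusAfter_cons, multusAfter_zero]

theorem multusAfterCount_true_succ (n : ℕ) :
    multusAfterCount true (n + 1) = multusAfterCount false n + multusAfterCount true n := by
  simp [multusAfterCount, Nat.card_subtype_fin_succ, multusAfter_cons, add_comm]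

theorem multusAfterCount_false_add_two (n : ℕ) :
    multusAfterCount false (n + 2) = multusAfterCount false (n + 1) + multusAfterCount true n := by
  -- After `0`, a string `1 0 g` is never multus and `1 1 g` is iff `g` is multus after `1`.
  simp [multusAfterCount, Nat.card_subtype_fin_succ, multusAfter_cons, add_comm]

theorem multusCount_add_three (n : ℕ) :
    multusCount (n + 3) + multusCount (n + 1) = 2 * multusCount (n + 2) + multusCount n := by
  simp only [multusCount_eq_multusAfterCount_false]
  have h₃ : multusAfterCount false (n + 3) =
      multusAfterCount false (n + 2) + multusAfterCount true (n + 1) :=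
    multusAfterCount_false_add_two (n + 1)
  have h₂ := multusAfterCount_false_add_two n
  have hC := multusAfterCount_true_succ n
  omega

theorem multus_count_recurrence :
    multusCount 0 = 1 ∧ multusCount 1 = 1 ∧ multusCount 2 = 2 ∧ multusCount 3 = 4 ∧
    (∀ n : ℕ, 4 ≤ n →
      (multusCount n : ℤ) =
        2 * multusCount (n - 1) - multusCount (n - 2) + multusCount (n - 3)) := by
  simp only [multusCount_eq_multusAfterCount_false]
  have h₀ := multusAfterCount_zero false
  have h₁ := multusAfterCount_false_one
  have h₂ : multusAfterCount false 2 = 2 := by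
    rw [multusAfterCount_false_add_two, h₁, multusAfterCount_zero]
  have h₃ : multusAfterCount false 3 = 4 := by
    rw [multusAfterCount_false_add_two, h₂, multusAfterCount_true_succ, h₀,
      multusAfterCount_zero]
  refine ⟨h₀, h₁, h₂, h₃, fun n hn => ?_⟩
  obtain ⟨m, rfl⟩ : ∃ m, n = m + 1 + 3 := ⟨n - 4, by omega⟩
  have h := multusCount_add_three (m + 1)
  simp only [multusCount_eq_multusAfterCount_false] at h
  simp only [show m + 1 + 3 - 1 = m + 1 + 2 by omega, show m + 1 + 3 - 2 = m + 1 + 1 by omega,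
    show m + 1 + 3 - 3 = m + 1 by omega]
  omega
end

section
/- The number of binary strings of length n in which every 1 has a neighboring 1 and every 0 has a neighboring 0 satisfies d_0 = 1 (empty string), d_1 = 0, d_2 = 2, d_3 = 2, and d_n = d_{n-1} + d_{n-2} for all n ≥ 4. -/
/-- Every 0 has a neighboring 0. -/
def ZeroNbr {n : ℕ} (f : Fin n → Bool) : Prop :=
  ∀ i : Fin n, f i = false →
    ∃ j : Fin n, (j.val = i.val + 1 ∨ j.val + 1 = i.val) ∧ f j = false

/-- A bitstring is bimultus if every 1 has a neighboring 1 and every 0 a neighboring 0. -/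
def Bimultus {n : ℕ} (f : Fin n → Bool) : Prop := Multus f ∧ ZeroNbr f

/-- Number of bimultus bitstrings of length `n`. -/
noncomputable def bimultusCount (n : ℕ) : ℕ := Nat.card {f : Fin n → Bool // Bimultus f}

instance {n : ℕ} (f : Fin n → Bool) : Decidable (Bimultus f) := by
  unfold Bimultus Multus ZeroNbr; infer_instance

lemma bimultus_iff {n : ℕ} (f : Fin n → Bool) :
    Bimultus f ↔ ∀ i : Fin n, ∃ j : Fin n,
      (j.val = i.val + 1 ∨ j.val + 1 = i.val) ∧ f j = f i := by
  constructor
  · rintro ⟨hM, hZ⟩ i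
    cases h : f i with
    | false => obtain ⟨j, hj, hfj⟩ := hZ i h; exact ⟨j, hj, hfj⟩
    | true => obtain ⟨j, hj, hfj⟩ := hM i h; exact ⟨j, hj, hfj⟩
  · intro h
    constructor <;> intro i hi <;> obtain ⟨j, hj, hfj⟩ := h i <;>
      exact ⟨j, hj, by rw [hfj, hi]⟩

/-- The last two bits of a bimultus string agree. -/
lemma last_pair {m : ℕ} (f : Fin (m + 2) → Bool) (hf : Bimultus f) :
    f ⟨m + 1, by omega⟩ = f ⟨m, by omega⟩ := by
  obtain ⟨j, hj, hfj⟩ := (bimultus_iff f).mp hf ⟨m + 1, by omega⟩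
  have hjv : j.val = m := by have := j.isLt; simp at hj; omega
  have : j = ⟨m, by omega⟩ := Fin.ext hjv
  rw [this] at hfj
  rw [← hfj]

/-- Extend a string of length `m+3` by duplicating its last bit. -/
def ext1 (m : ℕ) (g : Fin (m + 3) → Bool) : Fin (m + 4) → Bool :=
  fun i => if h : i.val < m + 3 then g ⟨i.val, h⟩ else g ⟨m + 2, by omega⟩

/-- Extend a string of length `m+2` by two copies of the flipped last bit. -/
def ext2 (m : ℕ) (g : Fin (m + 2) → Bool) : Fin (m + 4) → Bool :=
  fun i => if h : i.val < m + 2 then g ⟨i.val, h⟩ else !(g ⟨m + 1, by omega⟩)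

lemma ext1_bimultus {m : ℕ} (g : Fin (m + 3) → Bool) (hg : Bimultus g) :
    Bimultus (ext1 m g) := by
  rw [bimultus_iff]
  intro i
  by_cases hi : i.val < m + 3
  · obtain ⟨j, hj, hfj⟩ := (bimultus_iff g).mp hg ⟨i.val, hi⟩
    refine ⟨⟨j.val, by omega⟩, by simpa using hj, ?_⟩
    simp only [ext1]
    rw [dif_pos (show (j.val : ℕ) < m + 3 from j.isLt), dif_pos hi]
    simpa using hfj
  · have hiv : i.val = m + 3 := by have := i.isLt; omega
    refine ⟨⟨m + 2, by omega⟩, by simp; omega, ?_⟩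
    simp only [ext1]
    rw [dif_pos (show m + 2 < m + 3 by omega), dif_neg (by omega)]
lemma ext2_bimultus {m : ℕ} (g : Fin (m + 2) → Bool) (hg : Bimultus g) :
    Bimultus (ext2 m g) := by
  rw [bimultus_iff]
  intro i
  by_cases hi : i.val < m + 2
  · obtain ⟨j, hj, hfj⟩ := (bimultus_iff g).mp hg ⟨i.val, hi⟩
    refine ⟨⟨j.val, by omega⟩, by simpa using hj, ?_⟩
    simp only [ext2]
    rw [dif_pos (show (j.val : ℕ) < m + 2 from j.isLt), dif_pos hi]
    simpa using hfj
  · have hiv : i.val = m + 2 ∨ i.val = m + 3 := by have := i.isLt; omega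
    cases hiv with
    | inl h =>
      refine ⟨⟨m + 3, by omega⟩, by simp; omega, ?_⟩
      simp only [ext2]
      rw [dif_neg (by omega), dif_neg (by omega)]
    | inr h =>
      refine ⟨⟨m + 2, by omega⟩, by simp; omega, ?_⟩
      simp only [ext2]
      rw [dif_neg (by omega), dif_neg (by omega)]

/-- Restriction to length `m+3` of a bimultus string whose positions `m+1, m+2` agree. -/
lemma restrict1_bimultus {m : ℕ} (f : Fin (m + 4) → Bool) (hf : Bimultus f)
    (h : f ⟨m + 1, by omega⟩ = f ⟨m + 2, by omega⟩) :
    Bimultus (fun i : Fin (m + 3) => f ⟨i.val, by omega⟩) := by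
  rw [bimultus_iff]
  intro i
  obtain ⟨j, hj, hfj⟩ := (bimultus_iff f).mp hf ⟨i.val, by omega⟩
  by_cases hjv : j.val < m + 3
  · refine ⟨⟨j.val, hjv⟩, by simpa using hj, ?_⟩
    simpa using hfj
  · -- j.val = m + 3, so i.val = m + 2
    have hj3 : j.val = m + 3 := by have := j.isLt; omega
    have hi2 : i.val = m + 2 := by have := i.isLt; simp [hj3] at hj; omega
    refine ⟨⟨m + 1, by omega⟩, by simp; omega, ?_⟩
    simp only
    rw [h]
    congr 1
    exact Fin.ext (by simp [hi2])
/-- Restriction to length `m+2` of a bimultus string whose positions `m+1, m+2` differ. -/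
lemma restrict2_bimultus {m : ℕ} (f : Fin (m + 4) → Bool) (hf : Bimultus f)
    (h : f ⟨m + 1, by omega⟩ ≠ f ⟨m + 2, by omega⟩) :
    Bimultus (fun i : Fin (m + 2) => f ⟨i.val, by omega⟩) := by
  rw [bimultus_iff]
  intro i
  obtain ⟨j, hj, hfj⟩ := (bimultus_iff f).mp hf ⟨i.val, by omega⟩
  by_cases hjv : j.val < m + 2
  · refine ⟨⟨j.val, hjv⟩, by simpa using hj, ?_⟩
    simpa using hfj
  · exfalso
    have hj2 : j.val = m + 2 := by have := i.isLt; simp at hj; omega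
    have hi1 : i.val = m + 1 := by have := i.isLt; simp [hj2] at hj; omega
    apply h
    have e1 : (⟨i.val, by omega⟩ : Fin (m + 4)) = ⟨m + 1, by omega⟩ :=
      Fin.ext (by simp [hi1])
    have e2 : j = (⟨m + 2, by omega⟩ : Fin (m + 4)) := Fin.ext (by simp [hj2])
    rw [e1, e2] at hfj
    exact hfj.symm

noncomputable def bimEquiv (m : ℕ) :
    ({g : Fin (m + 3) → Bool // Bimultus g} ⊕ {g : Fin (m + 2) → Bool // Bimultus g}) ≃
      {f : Fin (m + 4) → Bool // Bimultus f} := by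
  apply Equiv.ofBijective (fun x => match x with
    | .inl ⟨g, hg⟩ => ⟨ext1 m g, ext1_bimultus g hg⟩
    | .inr ⟨g, hg⟩ => ⟨ext2 m g, ext2_bimultus g hg⟩)
  constructor
  · rintro (⟨g, hg⟩ | ⟨g, hg⟩) (⟨g', hg'⟩ | ⟨g', hg'⟩) h <;>
      simp only [Subtype.mk.injEq] at h
    · congr 1
      ext1
      funext i
      have := congrFun h ⟨i.val, by omega⟩
      simp only [ext1] at this
      rw [dif_pos i.isLt, dif_pos i.isLt] at this
      simpa using this
    · -- ext1 g = ext2 g' : contradiction via values at m+1, m+2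
      exfalso
      have h1 := congrFun h ⟨m + 1, by omega⟩
      have h2 := congrFun h ⟨m + 2, by omega⟩
      simp only [ext1, ext2] at h1 h2
      rw [dif_pos (by omega : m + 1 < m + 3), dif_pos (by omega : m + 1 < m + 2)] at h1
      rw [dif_pos (by omega : m + 2 < m + 3), dif_neg (by omega)] at h2
      have hg2 : g ⟨m + 2, by omega⟩ = g ⟨m + 1, by omega⟩ := last_pair g hg
      rw [hg2, h1] at h2
      simp at h2
    · exfalso
      have h1 := congrFun h ⟨m + 1, by omega⟩
      have h2 := congrFun h ⟨m + 2, by omega⟩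
      simp only [ext1, ext2] at h1 h2
      rw [dif_pos (by omega : m + 1 < m + 2), dif_pos (by omega : m + 1 < m + 3)] at h1
      rw [dif_neg (by omega), dif_pos (by omega : m + 2 < m + 3)] at h2
      have hg2 : g' ⟨m + 2, by omega⟩ = g' ⟨m + 1, by omega⟩ := last_pair g' hg'
      rw [hg2, ← h1] at h2
      simp at h2
    · congr 1
      ext1
      funext i
      have := congrFun h ⟨i.val, by omega⟩
      simp only [ext2] at this
      rw [dif_pos i.isLt, dif_pos i.isLt] at this
      simpa using this
  · rintro ⟨f, hf⟩
    have hlast : f ⟨m + 3, by omega⟩ = f ⟨m + 2, by omega⟩ := last_pair f hf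
    by_cases h : f ⟨m + 1, by omega⟩ = f ⟨m + 2, by omega⟩
    · refine ⟨.inl ⟨fun i : Fin (m + 3) => f ⟨i.val, by omega⟩,
        restrict1_bimultus f hf h⟩, ?_⟩
      simp only [Subtype.mk.injEq]
      funext i
      simp only [ext1]
      by_cases hi : i.val < m + 3
      · rw [dif_pos hi]
      · rw [dif_neg hi]
        have : i.val = m + 3 := by have := i.isLt; omega
        rw [← hlast]
        congr 1
        exact Fin.ext (by simp [this])
    · refine ⟨.inr ⟨fun i : Fin (m + 2) => f ⟨i.val, by omega⟩,
        restrict2_bimultus f hf h⟩, ?_⟩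
      simp only [Subtype.mk.injEq]
      funext i
      simp only [ext2]
      by_cases hi : i.val < m + 2
      · rw [dif_pos hi]
      · rw [dif_neg hi]
        have hne : f ⟨m + 2, by omega⟩ ≠ f ⟨m + 1, by omega⟩ := fun hh => h hh.symm
        have hval : f ⟨m + 2, by omega⟩ = !(f ⟨m + 1, by omega⟩) := by
          cases hb : f ⟨m + 1, by omega⟩ <;> cases hb' : f ⟨m + 2, by omega⟩ <;>
            simp_all
        have : i.val = m + 2 ∨ i.val = m + 3 := by have := i.isLt; omega
        cases this with
        | inl hv =>
          have : i = ⟨m + 2, by omega⟩ := Fin.ext hv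
          rw [this, hval]
        | inr hv =>
          have : i = ⟨m + 3, by omega⟩ := Fin.ext hv
          rw [this, hlast, hval]

lemma count_rec (m : ℕ) :
    bimultusCount (m + 4) = bimultusCount (m + 3) + bimultusCount (m + 2) := by
  unfold bimultusCount
  rw [← Nat.card_congr (bimEquiv m), Nat.card_sum]

theorem bimultus_count_recurrence :
    bimultusCount 0 = 1 ∧ bimultusCount 1 = 0 ∧ bimultusCount 2 = 2 ∧ bimultusCount 3 = 2 ∧
    (∀ n : ℕ, 4 ≤ n → bimultusCount n = bimultusCount (n - 1) + bimultusCount (n - 2)) := by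
  refine ⟨?_, ?_, ?_, ?_, ?_⟩
  · rw [bimultusCount, Nat.card_eq_fintype_card]; decide
  · rw [bimultusCount, Nat.card_eq_fintype_card]; decide
  · rw [bimultusCount, Nat.card_eq_fintype_card]; decide
  · rw [bimultusCount, Nat.card_eq_fintype_card]; decide
  · intro n hn
    obtain ⟨m, rfl⟩ : ∃ m, n = m + 4 := ⟨n - 4, by omega⟩
    have h1 : m + 4 - 1 = m + 3 := by omega
    have h2 : m + 4 - 2 = m + 2 := by omega
    rw [h1, h2, count_rec]
end

section
/- The number of binary strings of length n in which every 1 is isolated and every 0 has a neighboring 0 satisfies d_1 = 1, d_2 = 1, d_3 = 3, d_4 = 4, and d_n = d_{n-1} + d_{n-3} for all n ≥ 5. -/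
/-- No two adjacent 1s. -/
def Solus {n : ℕ} (f : Fin n → Bool) : Prop :=
  ∀ i : ℕ, ∀ h : i + 1 < n, ¬(f ⟨i, by omega⟩ = true ∧ f ⟨i + 1, h⟩ = true)

/-- A bitstring is persolus if all 1s are isolated and every 0 has a neighboring 0. -/
def Persolus {n : ℕ} (f : Fin n → Bool) : Prop := Solus f ∧ ZeroNbr f

/-- Number of persolus bitstrings of length `n`. -/
noncomputable def persolusCount (n : ℕ) : ℕ := Nat.card {f : Fin n → Bool // Persolus f}

/-!
Reading a word from left to right, persolus words are recognised by an automaton whose states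
record the last letters read: after a `1`, after a lone `0`, or after `00`. If `o n`, `z n`, `r n`
count the words of length `n` that can be appended in these states, then
`d (n+1) = o n + z n`, `o (n+1) = z n`, `z (n+1) = r n` and `r (n+1) = o n + r n`.
The transition matrix has characteristic polynomial `x^3 - x^2 - 1`, whence
`d (n+4) = d (n+3) + d (n+1)`.
-/

noncomputable def wordCount {α : Type*} (Q : List α → Prop) (n : ℕ) : ℕ :=
  Nat.card {f : Fin n → α // Q (List.ofFn f)}

theorem wordCount_succ {α : Type*} [Fintype α] (Q : List α → Prop) (n : ℕ) :
    wordCount Q (n + 1) = ∑ a, wordCount (fun l => Q (a :: l)) n := by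
  let e : {x : α × (Fin n → α) // Q (x.1 :: List.ofFn x.2)} ≃
      {f : Fin (n + 1) → α // Q (List.ofFn f)} :=
    (Fin.consEquiv fun _ => α).subtypeEquiv fun x => by simp [Fin.consEquiv]
  rw [wordCount, ← Nat.card_congr e,
    Nat.card_congr (Equiv.subtypeProdEquivSigmaSubtype fun a g => Q (a :: List.ofFn g)),
    Nat.card_sigma]
  rfl

theorem wordCount_bool_succ (Q : List Bool → Prop) (n : ℕ) :
    wordCount Q (n + 1) =
      wordCount (fun l => Q (true :: l)) n + wordCount (fun l => Q (false :: l)) n := by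
  rw [wordCount_succ, Fintype.sum_bool]

@[simp]
theorem wordCount_false {α : Type*} (n : ℕ) : wordCount (fun _ : List α => False) n = 0 := by
  simp [wordCount]

/-- The persolus conditions at the letters of `l`, inside a word in which `l` is preceded by a `0`
iff `z`. Isolation of `1`s is only checked forwards, so nothing else about the prefix matters. -/
def PersolusAfter : Bool → List Bool → Prop
  | _, [] => True
  | z, a :: l => (a = true → l[0]? ≠ some true) ∧ (a = false → z = true ∨ l[0]? = some false) ∧
      PersolusAfter (!a) l

namespace PersolusAfter

theorem iff_getElem? (z : Bool) (l : List Bool) : PersolusAfter z l ↔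
    (∀ i, l[i]? = some true → l[i + 1]? ≠ some true) ∧
    ∀ i, l[i]? = some false →
      (i = 0 ∧ z = true) ∨ ∃ j, (j = i + 1 ∨ j + 1 = i) ∧ l[j]? = some false := by
  induction l generalizing z with
  | nil => simp [PersolusAfter]
  | cons a l ih =>
    rw [PersolusAfter, ih]
    constructor
    · rintro ⟨h1, h0, hs, hz⟩
      refine ⟨?_, ?_⟩
      · rintro (_ | i) hi
        · simpa using h1 (by simpa using hi)
        · exact hs i hi
      · rintro (_ | i) hi <;> grind
    · rintro ⟨hs, hz⟩
      refine ⟨fun ha => by simpa [ha] using hs 0, fun ha => ?_, fun i hi => hs (i + 1) hi,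
        fun i hi => ?_⟩
      · have := hz 0 (by simp [ha])
        grind
      · have := hz (i + 1) hi
        grind

theorem wordCount_cons_true_succ (n : ℕ) :
    wordCount (fun l => PersolusAfter false (true :: l)) (n + 1) =
      wordCount (fun l => PersolusAfter false (false :: l)) n := by
  rw [wordCount_bool_succ]
  simp [PersolusAfter]

theorem wordCount_cons_false_succ (n : ℕ) :
    wordCount (fun l => PersolusAfter false (false :: l)) (n + 1) =
      wordCount (PersolusAfter true) n := by
  rw [wordCount_bool_succ]
  simp [PersolusAfter]

theorem wordCount_true_succ (n : ℕ) :
    wordCount (PersolusAfter true) (n + 1) =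
      wordCount (fun l => PersolusAfter false (true :: l)) n +
        wordCount (PersolusAfter true) n := by
  rw [wordCount_bool_succ]
  simp [PersolusAfter]

theorem wordCount_cons_true_zero : wordCount (fun l => PersolusAfter false (true :: l)) 0 = 1 := by
  simp [wordCount, PersolusAfter]

theorem wordCount_cons_false_zero :
    wordCount (fun l => PersolusAfter false (false :: l)) 0 = 0 := by
  simp [wordCount, PersolusAfter]

theorem wordCount_true_zero : wordCount (PersolusAfter true) 0 = 1 := by
  simp [wordCount, PersolusAfter]

end PersolusAfter

theorem persolus_iff_persolusAfter_ofFn {n : ℕ} (f : Fin n → Bool) :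
    Persolus f ↔ PersolusAfter false (List.ofFn f) := by
  simp only [PersolusAfter.iff_getElem?, Persolus, Solus, ZeroNbr, List.getElem?_ofFn,
    Bool.false_eq_true, and_false, false_or]
  refine and_congr (by grind) ⟨fun h i hi => ?_, fun h i hi => ?_⟩
  · obtain ⟨hin, hfi⟩ : ∃ h : i < n, f ⟨i, h⟩ = false := by simpa using hi
    obtain ⟨j, hj, hfj⟩ := h ⟨i, hin⟩ hfi
    exact ⟨j, hj, by simpa using hfj⟩
  · obtain ⟨j, hj, hfj⟩ := h i (by simpa using hi)
    obtain ⟨hjn, hfj⟩ : ∃ h : j < n, f ⟨j, h⟩ = false := by simpa using hfj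
    exact ⟨⟨j, hjn⟩, hj, hfj⟩

theorem persolusCount_eq_wordCount (n : ℕ) :
    persolusCount n = wordCount (PersolusAfter false) n :=
  Nat.card_congr (Equiv.subtypeEquivRight persolus_iff_persolusAfter_ofFn)

open PersolusAfter

theorem persolusCount_add_four (n : ℕ) :
    persolusCount (n + 4) = persolusCount (n + 3) + persolusCount (n + 1) := by
  simp only [persolusCount_eq_wordCount, wordCount_bool_succ (PersolusAfter false),
    wordCount_cons_true_succ, wordCount_cons_false_succ, wordCount_true_succ]
  omega

theorem persolus_count_recurrence :
    persolusCount 1 = 1 ∧ persolusCount 2 = 1 ∧ persolusCount 3 = 3 ∧ persolusCount 4 = 4 ∧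
    (∀ n : ℕ, 5 ≤ n → persolusCount n = persolusCount (n - 1) + persolusCount (n - 3)) := by
  have recurrence (n : ℕ) (hn : 5 ≤ n) :
      persolusCount n = persolusCount (n - 1) + persolusCount (n - 3) := by
    obtain ⟨k, rfl⟩ : ∃ k, n = k + 5 := ⟨n - 5, by omega⟩
    simpa using persolusCount_add_four (k + 1)
  refine ⟨?_, ?_, ?_, ?_, recurrence⟩ <;>
    simp only [persolusCount_eq_wordCount, wordCount_bool_succ (PersolusAfter false),
      wordCount_cons_true_succ, wordCount_cons_false_succ, wordCount_true_succ,
      wordCount_cons_true_zero, wordCount_cons_false_zero, wordCount_true_zero]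
end

section
/- For each k ≥ 1, the number H_n of solus binary strings of length n with no run of k consecutive 0s satisfies the generating function identity ∑_{n≥0} H_n z^n = (1 + z - z^k - z^{k+1})/(1 - z - z^2 + z^{k+1}) as formal power series. -/
def HasRun {n : ℕ} (b : Bool) (k : ℕ) (f : Fin n → Bool) : Prop :=
  ∃ s : ℕ, ∃ _ : s + k ≤ n, ∀ t : ℕ, ∀ _ : t < k, f ⟨s + t, by omega⟩ = b

/-- Number of solus bitstrings of length `n` with no run of `k` consecutive 0s. -/
noncomputable def solusNoZeroRunCount (k n : ℕ) : ℕ :=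
  Nat.card {f : Fin n → Bool // Solus f ∧ ¬ HasRun false k f}

/-!
Splitting off the first letter of an admissible string leaves an admissible string whose only
extra constraint is at its start: after a `1` it must not begin with `1`, after a `0` its leading
block of `0`s must be shorter. So let `Z_j` count admissible strings with fewer than `j` leading
`0`s and `W` those not beginning with `1`. Then `Z_0 = 0`, `Z_{j+1} = 1 + z (Z_j + W)` for `j < k`
and `W = 1 + z Z_{k-1}`, hence `Z_j = (1 + z W)(1 + z + ⋯ + z^{j-1})` and `H = Z_k`; eliminating
`W` gives the rational function.
-/

def StartsWith {n : ℕ} (b : Bool) (m : ℕ) (f : Fin n → Bool) : Prop :=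
  ∃ _ : m ≤ n, ∀ t : ℕ, ∀ ht : t < m, f ⟨t, by omega⟩ = b

@[simp]
theorem Fin.cons_mk_succ {α : Type*} {n j : ℕ} (a : α) (g : Fin n → α) (h : j + 1 < n + 1) :
    (Fin.cons a g : Fin (n + 1) → α) ⟨j + 1, h⟩ = g ⟨j, by omega⟩ :=
  Fin.cons_succ (α := fun _ => α) a g ⟨j, _⟩

section Runs

variable {n m : ℕ} {b c : Bool} {f : Fin n → Bool}

theorem startsWith_zero : StartsWith b 0 f := ⟨n.zero_le, by omega⟩

theorem StartsWith.le (h : StartsWith b m f) : m ≤ n := h.1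

theorem StartsWith.mono {m' : ℕ} (hm : m' ≤ m) (h : StartsWith b m f) : StartsWith b m' f :=
  ⟨hm.trans h.1, fun t ht => h.2 t (by omega)⟩

theorem StartsWith.hasRun (h : StartsWith b m f) : HasRun b m f :=
  ⟨0, by simpa using h.1, fun t ht => by simpa using h.2 t ht⟩

theorem HasRun.le (h : HasRun b m f) : m ≤ n := by
  obtain ⟨s, hs, -⟩ := h
  omega

theorem startsWith_cons :
    StartsWith b (m + 1) (Fin.cons c f : Fin (n + 1) → Bool) ↔ c = b ∧ StartsWith b m f := by
  constructor
  · rintro ⟨hm, h⟩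
    exact ⟨h 0 m.succ_pos, by omega, fun t ht => h (t + 1) (by omega)⟩
  · rintro ⟨rfl, hm, h⟩
    refine ⟨by omega, fun t ht => ?_⟩
    cases t with
    | zero => rfl
    | succ t => exact h t (by omega)

theorem hasRun_cons :
    HasRun b (m + 1) (Fin.cons c f : Fin (n + 1) → Bool) ↔
      HasRun b (m + 1) f ∨ c = b ∧ StartsWith b m f := by
  rw [← startsWith_cons]
  constructor
  · rintro ⟨_ | s, hs, h⟩
    · exact Or.inr ⟨by omega, fun t ht => by simpa using h t ht⟩
    · exact Or.inl ⟨s, by omega, fun t ht => by simpa [Nat.add_right_comm s 1 t] using h t ht⟩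
  · rintro (⟨s, hs, h⟩ | h)
    · exact ⟨s + 1, by omega, fun t ht => by simpa [Nat.add_right_comm s 1 t] using h t ht⟩
    · exact h.hasRun

theorem solus_iff_not_hasRun : Solus f ↔ ¬HasRun true 2 f := by
  constructor
  · rintro h ⟨s, hs, hr⟩
    exact h s (by omega) ⟨hr 0 (by omega), hr 1 (by omega)⟩
  · rintro h i hi ⟨h0, h1⟩
    exact h ⟨i, hi, fun t ht => by interval_cases t <;> assumption⟩

theorem solus_cons :
    Solus (Fin.cons c f : Fin (n + 1) → Bool) ↔ Solus f ∧ ¬(c = true ∧ StartsWith true 1 f) := by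
  simp only [solus_iff_not_hasRun, hasRun_cons, not_or]

end Runs

section Card

variable {α : Type*}

theorem Nat.card_subtype_fin_succ_fun [Fintype α] {n : ℕ} (P : (Fin (n + 1) → α) → Prop) :
    Nat.card {f // P f} = ∑ a, Nat.card {g : Fin n → α // P (Fin.cons a g)} := by
  let e := ((Fin.consEquiv fun _ => α).subtypeEquiv fun _ => Iff.rfl).symm.trans
    (Equiv.subtypeProdEquivSigmaSubtype fun a (g : Fin n → α) => P (Fin.cons a g))
  rw [Nat.card_congr e, Nat.card_sigma]

theorem Nat.card_subtype_fin_zero_fun {P : (Fin 0 → α) → Prop} (h : ∀ f, P f) :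
    Nat.card {f // P f} = 1 := by
  simp [Nat.card_congr (Equiv.subtypeUnivEquiv h)]

end Card

noncomputable def fewLeadingZerosCount (k j n : ℕ) : ℕ :=
  Nat.card {f : Fin n → Bool // Solus f ∧ ¬HasRun false k f ∧ ¬StartsWith false j f}

noncomputable def noLeadingOneCount (k n : ℕ) : ℕ :=
  Nat.card {f : Fin n → Bool // Solus f ∧ ¬HasRun false k f ∧ ¬StartsWith true 1 f}

theorem solusNoZeroRunCount_eq_fewLeadingZerosCount (k n : ℕ) :
    solusNoZeroRunCount k n = fewLeadingZerosCount k k n :=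
  Nat.card_congr <| Equiv.subtypeEquivRight fun _ =>
    ⟨fun h => ⟨h.1, h.2, fun hs => h.2 hs.hasRun⟩, fun h => ⟨h.1, h.2.1⟩⟩

theorem fewLeadingZerosCount_zero (k n : ℕ) : fewLeadingZerosCount k 0 n = 0 :=
  Nat.card_eq_zero.mpr <| .inl ⟨fun f => f.2.2.2 startsWith_zero⟩

section Recurrences

variable (m : ℕ) {j : ℕ} (n : ℕ)

theorem fewLeadingZerosCount_succ_zero : fewLeadingZerosCount (m + 1) (j + 1) 0 = 1 :=
  Nat.card_subtype_fin_zero_fun fun _ =>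
    ⟨fun _ _ => by omega, fun h => by have := h.le; omega, fun h => by have := h.le; omega⟩

theorem noLeadingOneCount_zero : noLeadingOneCount (m + 1) 0 = 1 :=
  Nat.card_subtype_fin_zero_fun fun _ =>
    ⟨fun _ _ => by omega, fun h => by have := h.le; omega, fun h => by have := h.le; omega⟩

theorem fewLeadingZerosCount_succ_succ (hj : j ≤ m) :
    fewLeadingZerosCount (m + 1) (j + 1) (n + 1) =
      fewLeadingZerosCount (m + 1) j n + noLeadingOneCount (m + 1) n := by
  rw [fewLeadingZerosCount, Nat.card_subtype_fin_succ_fun, Fintype.sum_bool, add_comm]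
  congr 1 <;> refine Nat.card_congr (Equiv.subtypeEquivRight fun g => ?_)
  · have := fun h : StartsWith false m g => h.mono hj
    simp only [solus_cons, hasRun_cons, startsWith_cons, Bool.false_eq_true, true_and, false_and]
    tauto
  · simp only [solus_cons, hasRun_cons, startsWith_cons, Bool.true_eq_false, true_and, false_and]
    tauto

theorem noLeadingOneCount_succ :
    noLeadingOneCount (m + 1) (n + 1) = fewLeadingZerosCount (m + 1) m n := by
  rw [noLeadingOneCount, Nat.card_subtype_fin_succ_fun, Fintype.sum_bool, fewLeadingZerosCount]
  simp [solus_cons, hasRun_cons, startsWith_cons, startsWith_zero]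

end Recurrences

section GeneratingFunctions

open PowerSeries

variable (m : ℕ)

theorem mk_noLeadingOneCount :
    mk (fun n => (noLeadingOneCount (m + 1) n : ℤ)) =
      1 + X * mk fun n => (fewLeadingZerosCount (m + 1) m n : ℤ) := by
  ext (_ | n) <;> simp [noLeadingOneCount_zero, noLeadingOneCount_succ]

theorem mk_fewLeadingZerosCount_succ {j : ℕ} (hj : j ≤ m) :
    mk (fun n => (fewLeadingZerosCount (m + 1) (j + 1) n : ℤ)) =
      1 + X * (mk (fun n => (fewLeadingZerosCount (m + 1) j n : ℤ)) +
        mk fun n => (noLeadingOneCount (m + 1) n : ℤ)) := by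
  ext (_ | n)
  · simp [fewLeadingZerosCount_succ_zero]
  · simp [fewLeadingZerosCount_succ_succ m n hj]

theorem mk_fewLeadingZerosCount {j : ℕ} (hj : j ≤ m + 1) :
    mk (fun n => (fewLeadingZerosCount (m + 1) j n : ℤ)) =
      (1 + X * mk fun n => (noLeadingOneCount (m + 1) n : ℤ)) * ∑ i ∈ Finset.range j, X ^ i := by
  induction j with
  | zero => ext; simp [fewLeadingZerosCount_zero]
  | succ j ih =>
    rw [mk_fewLeadingZerosCount_succ m (by omega), ih (by omega), geom_sum_succ]
    ring

end GeneratingFunctions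

open PowerSeries in
theorem solusNoZeroRunCount_gf (k : ℕ) (hk : 1 ≤ k) :
    (PowerSeries.mk (fun n => (solusNoZeroRunCount k n : ℤ))) *
        (1 - (X : ℤ⟦X⟧) - X ^ 2 + X ^ (k + 1)) =
      1 + (X : ℤ⟦X⟧) - X ^ k - X ^ (k + 1) := by
  obtain ⟨m, rfl⟩ : ∃ m, k = m + 1 := ⟨k - 1, by omega⟩
  have hW := mk_noLeadingOneCount m
  rw [mk_fewLeadingZerosCount m m.le_succ] at hW
  simp only [solusNoZeroRunCount_eq_fewLeadingZerosCount, mk_fewLeadingZerosCount m le_rfl,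
    geom_sum_succ]
  set W := mk fun n => (noLeadingOneCount (m + 1) n : ℤ)
  set S := ∑ i ∈ Finset.range m, (X : ℤ⟦X⟧) ^ i
  linear_combination (X * (1 - X) * (X * S + 1)) * hW -
    (X ^ 2 * (1 + X * W) * (X * S + 1) + X + X ^ 2) * geom_sum_mul (X : ℤ⟦X⟧) m
end

section
/- Let d_n count persolus strings of length n and a_n their total bitsum. Then lim_{n→∞} a_n/(n d_n) = (1/3)(1 - ((31+3√93)/1922)^{1/3} - ((31-3√93)/1922)^{1/3}). -/
open scoped Classical

def bitsum {n : ℕ} (f : Fin n → Bool) : ℕ := (Finset.univ.filter fun i => f i = true).card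

noncomputable def persolusBitsum (n : ℕ) : ℕ :=
  ∑ f : Fin n → Bool, if Persolus f then bitsum f else 0

def pstep : ℕ → Bool → ℕ
| 0, true => 1 | 0, false => 2
| 1, true => 4 | 1, false => 2
| 2, true => 4 | 2, false => 3
| 3, true => 1 | 3, false => 3
| _, _ => 4

def ok : ℕ → List Bool → Bool
| s, [] => decide (s ≠ 2 ∧ s ≠ 4)
| s, b :: l => ok (pstep s b) l

@[simp] lemma ok_nil (s : ℕ) : ok s [] = decide (s ≠ 2 ∧ s ≠ 4) := rfl
@[simp] lemma ok_cons (s : ℕ) (b : Bool) (l : List Bool) :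
    ok s (b :: l) = ok (pstep s b) l := rfl

lemma ok4 (l : List Bool) : ok 4 l = false := by
  induction l with
  | nil => simp [ok]
  | cons b t ih => simpa [ok, pstep] using ih

def SolL (l : List Bool) : Prop :=
  ∀ i : ℕ, ¬(l[i]? = some true ∧ l[i+1]? = some true)

def ZL (l : List Bool) : Prop :=
  ∀ i : ℕ, l[i]? = some false →
    (l[i+1]? = some false ∨ ∃ j, j + 1 = i ∧ l[j]? = some false)

def PL (l : List Bool) : Prop := SolL l ∧ ZL l

lemma PL_nil : PL [] := by
  constructor <;> intro i <;> simp

lemma PL_one : PL [true] := by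
  constructor
  · rintro i ⟨h1, h2⟩
    rcases i with _|i <;> simp_all
  · intro i hi
    rcases i with _|i <;> simp_all

lemma PL_two : PL [false, false] := by
  constructor
  · rintro i ⟨h1, h2⟩
    rcases i with _|_|i <;> simp_all
  · intro i hi
    rcases i with _|_|i <;> simp_all

lemma not_PL_TT (t : List Bool) : ¬ PL (true :: true :: t) := by
  rintro ⟨hS, _⟩
  exact hS 0 (by simp)

lemma not_PL_FT (t : List Bool) : ¬ PL (false :: true :: t) := by
  rintro ⟨_, hZ⟩
  rcases hZ 0 (by simp) with h | ⟨j, hj, _⟩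
  · simp at h
  · omega

lemma PL_A (t : List Bool) : PL (true :: false :: t) ↔ PL (false :: t) := by
  constructor
  · rintro ⟨hS, hZ⟩
    constructor
    · rintro i ⟨h1, h2⟩
      rcases i with _|i
      · simp at h1
      · exact hS (i+2) ⟨by simpa using h1, by simpa using h2⟩
    · intro i hi
      rcases i with _|i
      · rcases hZ 1 (by simp) with h | ⟨j, hj, hj2⟩
        · left; simpa using h
        · have hj0 : j = 0 := by omega
          subst hj0; simp at hj2
      · rcases hZ (i+2) (by simpa using hi) with h | ⟨j, hj, hj2⟩
        · left; simpa using h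
        · have : j = i + 1 := by omega
          subst this
          right; exact ⟨i, rfl, by simpa using hj2⟩
  · rintro ⟨hS, hZ⟩
    constructor
    · rintro i ⟨h1, h2⟩
      rcases i with _|i
      · simp at h2
      · exact hS i ⟨by simpa using h1, by simpa using h2⟩
    · intro i hi
      rcases i with _|i
      · simp at hi
      · rcases hZ i (by simpa using hi) with h | ⟨j, hj, hj2⟩
        · left; simpa using h
        · right; exact ⟨j+1, by omega, by simpa using hj2⟩

lemma PL_B (t : List Bool) : PL (false :: false :: true :: t) ↔ PL (true :: t) := by
  constructor
  · rintro ⟨hS, hZ⟩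
    constructor
    · rintro i ⟨h1, h2⟩
      rcases i with _|i
      · exact hS 2 ⟨by simp, by simpa using h2⟩
      · exact hS (i+3) ⟨by simpa using h1, by simpa using h2⟩
    · intro i hi
      rcases i with _|i
      · simp at hi
      · rcases hZ (i+3) (by simpa using hi) with h | ⟨j, hj, hj2⟩
        · left; simpa using h
        · have : j = i + 2 := by omega
          subst this
          rcases i with _|i
          · simp at hj2
          · right; exact ⟨i+1, rfl, by simpa using hj2⟩
  · rintro ⟨hS, hZ⟩
    constructor
    · rintro i ⟨h1, h2⟩
      rcases i with _|_|_|i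
      · simp at h1
      · simp at h1
      · exact hS 0 ⟨by simp, by simpa using h2⟩
      · exact hS (i+1) ⟨by simpa using h1, by simpa using h2⟩
    · intro i hi
      rcases i with _|_|_|i
      · left; simp
      · right; exact ⟨0, rfl, by simp⟩
      · simp at hi
      · rcases hZ (i+1) (by simpa using hi) with h | ⟨j, hj, hj2⟩
        · left; simpa using h
        · rcases j with _|j
          · simp at hj2
          · right; exact ⟨j+3, by omega, by simpa using hj2⟩

lemma PL_C (t : List Bool) :
    PL (false :: false :: false :: t) ↔ PL (false :: false :: t) := by
  constructor
  · rintro ⟨hS, hZ⟩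
    constructor
    · rintro i ⟨h1, h2⟩
      exact hS (i+1) ⟨by simpa using h1, by simpa using h2⟩
    · intro i hi
      rcases i with _|i
      · left; simp
      · rcases hZ (i+2) (by simpa using hi) with h | ⟨j, hj, hj2⟩
        · left; simpa using h
        · have : j = i + 1 := by omega
          subst this
          right; exact ⟨i, rfl, by simpa using hj2⟩
  · rintro ⟨hS, hZ⟩
    constructor
    · rintro i ⟨h1, h2⟩
      rcases i with _|i
      · simp at h1
      · exact hS i ⟨by simpa using h1, by simpa using h2⟩
    · intro i hi
      rcases i with _|i
      · left; simp
      · rcases hZ i (by simpa using hi) with h | ⟨j, hj, hj2⟩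
        · left; simpa using h
        · right; exact ⟨j+1, by omega, by simpa using hj2⟩

lemma ok_iff (l : List Bool) :
    (ok 0 l = true ↔ PL l) ∧ (ok 1 l = true ↔ PL (true :: l)) ∧
    (ok 2 l = true ↔ PL (false :: l)) ∧ (ok 3 l = true ↔ PL (false :: false :: l)) := by
  induction l with
  | nil =>
    refine ⟨by simpa using PL_nil, by simpa using PL_one, ?_, by simpa using PL_two⟩
    simp only [ok_nil]
    constructor
    · intro h; simp at h
    · intro h
      rcases h with ⟨_, hZ⟩
      rcases hZ 0 (by simp) with h | ⟨j, hj, _⟩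
      · simp at h
      · omega
  | cons b t ih =>
    obtain ⟨ih0, ih1, ih2, ih3⟩ := ih
    cases b
    · refine ⟨by simpa [pstep] using ih2, ?_, by simpa [pstep] using ih3, ?_⟩
      · simp only [ok_cons, pstep]
        rw [ih2, PL_A]
      · simp only [ok_cons, pstep]
        rw [ih3, PL_C]
    · refine ⟨by simpa [pstep] using ih1, ?_, ?_, ?_⟩
      · simp only [ok_cons, pstep]
        rw [ok4]
        simpa using not_PL_TT t
      · simp only [ok_cons, pstep]
        rw [ok4]
        simpa using not_PL_FT t
      · simp only [ok_cons, pstep]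
        rw [ih1, PL_B]

lemma persolus_iff_PL {n : ℕ} (f : Fin n → Bool) : Persolus f ↔ PL (List.ofFn f) := by
  have hget : ∀ i : ℕ, (List.ofFn f)[i]? = if h : i < n then some (f ⟨i, h⟩) else none := by
    intro i
    rw [List.getElem?_ofFn]
  constructor
  · rintro ⟨hS, hZ⟩
    constructor
    · rintro i ⟨h1, h2⟩
      rw [hget] at h1 h2
      split_ifs at h1 h2 with hi1 hi2
      · exact hS i hi2 ⟨by simpa using h1, by simpa using h2⟩
    · intro i hi
      rw [hget] at hi
      split_ifs at hi with hlt
      · obtain ⟨j, hj, hjf⟩ := hZ ⟨i, hlt⟩ (by simpa using hi)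
        simp only [Fin.val_mk] at hj
        rcases hj with hj | hj
        · left
          rw [hget]
          rw [dif_pos (by omega : i + 1 < n)]
          simp only [Option.some.injEq]
          have : (⟨i+1, by omega⟩ : Fin n) = j := by
            apply Fin.ext; simp [hj]
          rw [this]; exact hjf
        · right
          refine ⟨j.val, hj, ?_⟩
          rw [hget, dif_pos j.isLt]
          simp only [Option.some.injEq]
          have : (⟨j.val, j.isLt⟩ : Fin n) = j := rfl
          rw [this]; exact hjf
  · rintro ⟨hS, hZ⟩
    constructor
    · intro i h hc
      refine hS i ⟨?_, ?_⟩
      · rw [hget, dif_pos (by omega : i < n)]; simpa using hc.1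
      · rw [hget, dif_pos h]; simpa using hc.2
    · intro i hi
      have := hZ i.val (by rw [hget, dif_pos i.isLt]; simpa using hi)
      rcases this with h | ⟨j, hj, hjf⟩
      · rw [hget] at h
        split_ifs at h with hlt
        · exact ⟨⟨i.val+1, hlt⟩, Or.inl rfl, by simpa using h⟩
      · rw [hget] at hjf
        split_ifs at hjf with hlt
        · exact ⟨⟨j, hlt⟩, Or.inr hj, by simpa using hjf⟩

lemma persolus_iff_ok {n : ℕ} (f : Fin n → Bool) :
    Persolus f ↔ ok 0 (List.ofFn f) = true := by
  rw [persolus_iff_PL, (ok_iff (List.ofFn f)).1]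
noncomputable section
def cnt (s n : ℕ) : ℕ :=
  (Finset.univ.filter fun f : Fin n → Bool => ok s (List.ofFn f) = true).card

def bcnt (s n : ℕ) : ℕ :=
  ∑ f : Fin n → Bool, if ok s (List.ofFn f) = true then bitsum f else 0

lemma ofFn_cons {n : ℕ} (b : Bool) (g : Fin n → Bool) :
    List.ofFn (Fin.cons b g) = b :: List.ofFn g := by
  rw [List.ofFn_succ]
  congr 1

lemma sum_split {n : ℕ} {M : Type*} [AddCommMonoid M] (F : (Fin (n+1) → Bool) → M) :
    ∑ f : Fin (n+1) → Bool, F f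
      = (∑ g : Fin n → Bool, F (Fin.cons true g)) + ∑ g : Fin n → Bool, F (Fin.cons false g) := by
  rw [← (Fin.consEquiv (fun _ : Fin (n+1) => Bool)).sum_comp F]
  rw [Fintype.sum_prod_type]
  rw [Fintype.sum_bool]
  rfl

lemma bitsum_cons {n : ℕ} (b : Bool) (g : Fin n → Bool) :
    bitsum (Fin.cons b g) = (if b = true then 1 else 0) + bitsum g := by
  unfold bitsum
  rw [Finset.card_filter, Finset.card_filter, Fin.sum_univ_succ]
  simp [Fin.cons_zero, Fin.cons_succ]

lemma cnt_succ (s n : ℕ) :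
    cnt s (n+1) = cnt (pstep s true) n + cnt (pstep s false) n := by
  unfold cnt
  rw [Finset.card_filter, Finset.card_filter, Finset.card_filter]
  rw [sum_split (fun f => if ok s (List.ofFn f) = true then 1 else 0)]
  congr 1 <;> exact Finset.sum_congr rfl fun g _ => by rw [ofFn_cons, ok_cons]

lemma bcnt_succ (s n : ℕ) :
    bcnt s (n+1) = (cnt (pstep s true) n + bcnt (pstep s true) n) + bcnt (pstep s false) n := by
  unfold bcnt
  rw [sum_split (fun f => if ok s (List.ofFn f) = true then bitsum f else 0)]
  congr 1
  · rw [cnt, Finset.card_filter, ← Finset.sum_add_distrib]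
    exact Finset.sum_congr rfl fun g _ => by
      rw [ofFn_cons, ok_cons, bitsum_cons]
      split_ifs <;> simp_all
  · exact Finset.sum_congr rfl fun g _ => by
      rw [ofFn_cons, ok_cons, bitsum_cons]
      simp only [Bool.false_eq_true, if_false, zero_add]

lemma cnt4 (n : ℕ) : cnt 4 n = 0 := by
  unfold cnt
  rw [Finset.card_eq_zero, Finset.filter_eq_empty_iff]
  intro f _
  simp [ok4]

lemma bcnt4 (n : ℕ) : bcnt 4 n = 0 := by
  unfold bcnt
  exact Finset.sum_eq_zero fun f _ => by simp [ok4]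


lemma cnt0_succ (n : ℕ) : cnt 0 (n+1) = cnt 1 n + cnt 2 n := by
  simpa [pstep] using cnt_succ 0 n
lemma cnt1_succ (n : ℕ) : cnt 1 (n+1) = cnt 2 n := by
  simpa [pstep, cnt4] using cnt_succ 1 n
lemma cnt2_succ (n : ℕ) : cnt 2 (n+1) = cnt 3 n := by
  simpa [pstep, cnt4] using cnt_succ 2 n
lemma cnt3_succ (n : ℕ) : cnt 3 (n+1) = cnt 1 n + cnt 3 n := by
  simpa [pstep] using cnt_succ 3 n

lemma cnt3_rec (n : ℕ) : cnt 3 (n+3) = cnt 3 (n+2) + cnt 3 n := by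
  rw [cnt3_succ, cnt1_succ, cnt2_succ, Nat.add_comm]

lemma cnt0_eq (n : ℕ) : cnt 0 (n+3) = cnt 3 n + cnt 3 (n+1) := by
  rw [cnt0_succ, cnt1_succ, cnt2_succ, cnt2_succ]

lemma bcnt0_succ (n : ℕ) : bcnt 0 (n+1) = cnt 1 n + bcnt 1 n + bcnt 2 n := by
  simpa [pstep] using bcnt_succ 0 n
lemma bcnt1_succ (n : ℕ) : bcnt 1 (n+1) = bcnt 2 n := by
  simpa [pstep, cnt4, bcnt4] using bcnt_succ 1 n
lemma bcnt2_succ (n : ℕ) : bcnt 2 (n+1) = bcnt 3 n := by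
  simpa [pstep, cnt4, bcnt4] using bcnt_succ 2 n
lemma bcnt3_succ (n : ℕ) : bcnt 3 (n+1) = cnt 1 n + bcnt 1 n + bcnt 3 n := by
  simpa [pstep] using bcnt_succ 3 n

lemma bcnt3_rec (n : ℕ) : bcnt 3 (n+3) = bcnt 3 (n+2) + bcnt 3 n + cnt 3 n := by
  rw [bcnt3_succ, bcnt1_succ, bcnt2_succ, cnt1_succ, cnt2_succ]
  ring

lemma bcnt0_eq (n : ℕ) : bcnt 0 (n+3) = cnt 3 n + bcnt 3 n + bcnt 3 (n+1) := by
  rw [bcnt0_succ, bcnt1_succ, bcnt2_succ, bcnt2_succ, cnt1_succ, cnt2_succ]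

lemma ok3_replicate (n : ℕ) : ok 3 (List.replicate n false) = true := by
  induction n with
  | zero => rfl
  | succ n ih => rw [List.replicate_succ, ok_cons]; exact ih

lemma cnt3_pos (n : ℕ) : 0 < cnt 3 n := by
  rw [cnt, Finset.card_pos]
  refine ⟨fun _ => false, Finset.mem_filter.mpr ⟨Finset.mem_univ _, ?_⟩⟩
  rw [List.ofFn_const]
  exact ok3_replicate n

lemma persolusCount_eq (n : ℕ) : persolusCount n = cnt 0 n := by
  rw [persolusCount, Nat.card_eq_fintype_card, Fintype.card_subtype, cnt]
  congr 1
  ext f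
  simp [persolus_iff_ok]

lemma persolusBitsum_eq (n : ℕ) : persolusBitsum n = bcnt 0 n := by
  rw [persolusBitsum, bcnt]
  exact Finset.sum_congr rfl fun f _ => if_congr (persolus_iff_ok f) rfl rfl

end


section Window

variable (l : ℝ) (q : ℕ → ℝ)

lemma pow_bounds (hl1 : (0.68:ℝ) ≤ l) (hl2 : l ≤ 0.685) :
    (0.46:ℝ) ≤ l^2 ∧ l^2 ≤ (0.47:ℝ) ∧ (0.31:ℝ) ≤ l^3 ∧ l^3 ≤ (0.33:ℝ) ∧
    (0.21:ℝ) ≤ l^4 ∧ l^4 ≤ (0.23:ℝ) ∧ (0.14:ℝ) ≤ l^5 ∧ l^5 ≤ (0.16:ℝ) := by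
  have h2a : (0.46:ℝ) ≤ l^2 := by nlinarith [sq_nonneg (l - 0.68)]
  have h2b : l^2 ≤ (0.47:ℝ) := by nlinarith [sq_nonneg (l - 0.685)]
  have h3a : (0.31:ℝ) ≤ l^3 := by nlinarith [mul_nonneg (by linarith : (0:ℝ) ≤ l - 0.68) (by linarith : (0:ℝ) ≤ l^2 - 0.46)]
  have h3b : l^3 ≤ (0.33:ℝ) := by nlinarith [mul_nonneg (by linarith : (0:ℝ) ≤ 0.685 - l) (by linarith : (0:ℝ) ≤ l^2 - 0.46)]
  have h4a : (0.21:ℝ) ≤ l^4 := by nlinarith [mul_nonneg (by linarith : (0:ℝ) ≤ l - 0.68) (by linarith : (0:ℝ) ≤ l^3 - 0.31)]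
  have h4b : l^4 ≤ (0.23:ℝ) := by nlinarith [mul_nonneg (by linarith : (0:ℝ) ≤ 0.685 - l) (by linarith : (0:ℝ) ≤ l^3 - 0.31)]
  have h5a : (0.14:ℝ) ≤ l^5 := by nlinarith [mul_nonneg (by linarith : (0:ℝ) ≤ l - 0.68) (by linarith : (0:ℝ) ≤ l^4 - 0.21)]
  have h5b : l^5 ≤ (0.16:ℝ) := by nlinarith [mul_nonneg (by linarith : (0:ℝ) ≤ 0.685 - l) (by linarith : (0:ℝ) ≤ l^4 - 0.21)]
  exact ⟨h2a, h2b, h3a, h3b, h4a, h4b, h5a, h5b⟩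

lemma coef_bound1 (hl1 : (0.68:ℝ) ≤ l) (hl2 : l ≤ 0.685) : (1:ℝ)/10 ≤ l^2*(1-l) := by
  obtain ⟨a,b,c,d,e,f,g,h⟩ := pow_bounds l hl1 hl2; nlinarith
lemma coef_bound2 (hl1 : (0.68:ℝ) ≤ l) (hl2 : l ≤ 0.685) : (1:ℝ)/10 ≤ l*(1-l) := by
  obtain ⟨a,b,c,d,e,f,g,h⟩ := pow_bounds l hl1 hl2; nlinarith
lemma coef_bound3 (hl1 : (0.68:ℝ) ≤ l) (hl2 : l ≤ 0.685) : (1:ℝ)/10 ≤ l^3+(1-l) := by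
  obtain ⟨a,b,c,d,e,f,g,h⟩ := pow_bounds l hl1 hl2; nlinarith
lemma coef_bound4 (hl1 : (0.68:ℝ) ≤ l) (hl2 : l ≤ 0.685) : (1:ℝ)/10 ≤ l^3*(1-l)+(1-l)^2 := by
  obtain ⟨a,b,c,d,e,f,g,h⟩ := pow_bounds l hl1 hl2; nlinarith
lemma coef_bound5 (hl1 : (0.68:ℝ) ≤ l) (hl2 : l ≤ 0.685) : (1:ℝ)/10 ≤ l^4+2*l*(1-l) := by
  obtain ⟨a,b,c,d,e,f,g,h⟩ := pow_bounds l hl1 hl2; nlinarith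
lemma coef_bound6 (hl1 : (0.68:ℝ) ≤ l) (hl2 : l ≤ 0.685) : (1:ℝ)/10 ≤ l^4*(1-l)+2*l*(1-l)^2 := by
  obtain ⟨a,b,c,d,e,f,g,h⟩ := pow_bounds l hl1 hl2; nlinarith
lemma coef_bound7 (hl1 : (0.68:ℝ) ≤ l) (hl2 : l ≤ 0.685) : (1:ℝ)/10 ≤ l^5+3*l^2*(1-l) := by
  obtain ⟨a,b,c,d,e,f,g,h⟩ := pow_bounds l hl1 hl2; nlinarith

lemma window_conv (hl1 : (0.68:ℝ) ≤ l) (hl2 : l ≤ 0.685)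
    (hq : ∀ n, q (n+3) = l * q (n+2) + (1-l) * q n) :
    ∃ C : ℝ, Filter.Tendsto q Filter.atTop (nhds C) ∧ min (q 0) (min (q 1) (q 2)) ≤ C := by
  have hl0 : (0:ℝ) < l := by linarith
  have hl1' : (0:ℝ) < 1 - l := by linarith
  set mn : ℕ → ℝ := fun n => min (q n) (min (q (n+1)) (q (n+2))) with hmn
  set Mx : ℕ → ℝ := fun n => max (q n) (max (q (n+1)) (q (n+2))) with hMx
  have hmle : ∀ n, mn n ≤ q n ∧ mn n ≤ q (n+1) ∧ mn n ≤ q (n+2) := fun n =>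
    ⟨min_le_left _ _, le_trans (min_le_right _ _) (min_le_left _ _),
      le_trans (min_le_right _ _) (min_le_right _ _)⟩
  have hMge : ∀ n, q n ≤ Mx n ∧ q (n+1) ≤ Mx n ∧ q (n+2) ≤ Mx n := fun n =>
    ⟨le_max_left _ _, le_trans (le_max_left _ _) (le_max_right _ _),
      le_trans (le_max_right _ _) (le_max_right _ _)⟩
  have hmM : ∀ n, mn n ≤ Mx n := fun n => le_trans (hmle n).1 (hMge n).1
  have hmn_mono : Monotone mn := by
    apply monotone_nat_of_le_succ
    intro n
    have h1 := (hmle n).1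
    have h3 := (hmle n).2.2
    have hrec := hq n
    have h4 : mn n ≤ q (n+3) := by
      have p1 : (0:ℝ) ≤ l * (q (n+2) - mn n) := mul_nonneg hl0.le (by linarith)
      have p2 : (0:ℝ) ≤ (1-l) * (q n - mn n) := mul_nonneg hl1'.le (by linarith)
      linarith
    exact le_min (hmle n).2.1 (le_min h3 h4)
  have hMx_anti : Antitone Mx := by
    apply antitone_nat_of_succ_le
    intro n
    have h1 := (hMge n).1
    have h3 := (hMge n).2.2
    have hrec := hq n
    have h4 : q (n+3) ≤ Mx n := by
      have p1 : (0:ℝ) ≤ l * (Mx n - q (n+2)) := mul_nonneg hl0.le (by linarith)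
      have p2 : (0:ℝ) ≤ (1-l) * (Mx n - q n) := mul_nonneg hl1'.le (by linarith)
      linarith
    exact max_le (hMge n).2.1 (max_le h3 h4)
  have e5 : ∀ n, q (n+5) = l^2*(1-l)*q n + l*(1-l)*q (n+1) + (l^3+(1-l))*q (n+2) := by
    intro n
    have h0 := hq n; have h1 := hq (n+1); have h2 := hq (n+2)
    have e2 : n+1+2 = n+3 := by ring
    have e3 : n+1+3 = n+4 := by ring
    have e4 : n+2+2 = n+4 := by ring
    have e5' : n+2+3 = n+5 := by ring
    rw [e2, e3] at h1; rw [e4, e5'] at h2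
    linear_combination h2 + l * h1 + l^2 * h0
  have e6 : ∀ n, q (n+6) = (l^3*(1-l)+(1-l)^2)*q n + l^2*(1-l)*q (n+1) + (l^4+2*l*(1-l))*q (n+2) := by
    intro n
    have h0 := hq n
    have h5 := e5 (n+1)
    have e1 : n+1+5 = n+6 := by ring
    have e2 : n+1+1 = n+2 := by ring
    have e3 : n+1+2 = n+3 := by ring
    rw [e1, e2, e3] at h5
    linear_combination h5 + (l^3+(1-l))*h0
  have e7 : ∀ n, q (n+7) = (l^4*(1-l)+2*l*(1-l)^2)*q n + (l^3*(1-l)+(1-l)^2)*q (n+1) + (l^5+3*l^2*(1-l))*q (n+2) := by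
    intro n
    have h0 := hq n
    have h6 := e6 (n+1)
    have e1 : n+1+6 = n+7 := by ring
    have e2 : n+1+1 = n+2 := by ring
    have e3 : n+1+2 = n+3 := by ring
    rw [e1, e2, e3] at h6
    linear_combination h6 + (l^4+2*l*(1-l))*h0
  have hcontr : ∀ n, Mx (n+5) ≤ Mx n - (1/10)*(Mx n - mn n) := by
    intro n
    have hM1 := (hMge n).1; have hM2 := (hMge n).2.1; have hM3 := (hMge n).2.2
    have c1 := coef_bound1 l hl1 hl2
    have c2 := coef_bound2 l hl1 hl2
    have c3 := coef_bound3 l hl1 hl2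
    have c4 := coef_bound4 l hl1 hl2
    have c5 := coef_bound5 l hl1 hl2
    have c6 := coef_bound6 l hl1 hl2
    have c7 := coef_bound7 l hl1 hl2
    have he5 := e5 n; have he6 := e6 n; have he7 := e7 n
    have hb1 : (0:ℝ) ≤ Mx n - q n := by linarith
    have hb2 : (0:ℝ) ≤ Mx n - q (n+1) := by linarith
    have hb3 : (0:ℝ) ≤ Mx n - q (n+2) := by linarith
    have hcase : mn n = q n ∨ mn n = q (n+1) ∨ mn n = q (n+2) := by
      rcases min_choice (q n) (min (q (n+1)) (q (n+2))) with h | h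
      · exact Or.inl h
      · rcases min_choice (q (n+1)) (q (n+2)) with h' | h'
        · exact Or.inr (Or.inl (h.trans h'))
        · exact Or.inr (Or.inr (h.trans h'))
    have A1 : (0:ℝ) ≤ l^2*(1-l) := by linarith
    have A2 : (0:ℝ) ≤ l*(1-l) := by linarith
    have A3 : (0:ℝ) ≤ l^3+(1-l) := by linarith
    have A4 : (0:ℝ) ≤ l^3*(1-l)+(1-l)^2 := by linarith
    have A5 : (0:ℝ) ≤ l^4+2*l*(1-l) := by linarith
    have A6 : (0:ℝ) ≤ l^4*(1-l)+2*l*(1-l)^2 := by linarith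
    have A7 : (0:ℝ) ≤ l^5+3*l^2*(1-l) := by linarith
    have k5 : q (n+5) ≤ Mx n - (1/10)*(Mx n - mn n) := by
      rcases hcase with h | h | h
      · linarith only [he5, h, mul_nonneg A2 hb2, mul_nonneg A3 hb3,
          mul_nonneg (by linarith : (0:ℝ) ≤ l^2*(1-l) - 1/10) hb1]
      · linarith only [he5, h, mul_nonneg A1 hb1, mul_nonneg A3 hb3,
          mul_nonneg (by linarith : (0:ℝ) ≤ l*(1-l) - 1/10) hb2]
      · linarith only [he5, h, mul_nonneg A1 hb1, mul_nonneg A2 hb2,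
          mul_nonneg (by linarith : (0:ℝ) ≤ l^3+(1-l) - 1/10) hb3]
    have k6 : q (n+6) ≤ Mx n - (1/10)*(Mx n - mn n) := by
      rcases hcase with h | h | h
      · linarith only [he6, h, mul_nonneg A1 hb2, mul_nonneg A5 hb3,
          mul_nonneg (by linarith : (0:ℝ) ≤ l^3*(1-l)+(1-l)^2 - 1/10) hb1]
      · linarith only [he6, h, mul_nonneg A4 hb1, mul_nonneg A5 hb3,
          mul_nonneg (by linarith : (0:ℝ) ≤ l^2*(1-l) - 1/10) hb2]
      · linarith only [he6, h, mul_nonneg A4 hb1, mul_nonneg A1 hb2,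
          mul_nonneg (by linarith : (0:ℝ) ≤ l^4+2*l*(1-l) - 1/10) hb3]
    have k7 : q (n+7) ≤ Mx n - (1/10)*(Mx n - mn n) := by
      rcases hcase with h | h | h
      · linarith only [he7, h, mul_nonneg A4 hb2, mul_nonneg A7 hb3,
          mul_nonneg (by linarith : (0:ℝ) ≤ l^4*(1-l)+2*l*(1-l)^2 - 1/10) hb1]
      · linarith only [he7, h, mul_nonneg A6 hb1, mul_nonneg A7 hb3,
          mul_nonneg (by linarith : (0:ℝ) ≤ l^3*(1-l)+(1-l)^2 - 1/10) hb2]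
      · linarith only [he7, h, mul_nonneg A6 hb1, mul_nonneg A4 hb2,
          mul_nonneg (by linarith : (0:ℝ) ≤ l^5+3*l^2*(1-l) - 1/10) hb3]
    have h67 : n+5+1 = n+6 := by ring
    have h77 : n+5+2 = n+7 := by ring
    show max (q (n+5)) (max (q (n+5+1)) (q (n+5+2))) ≤ _
    rw [h67, h77]
    exact max_le k5 (max_le k6 k7)
  set osc : ℕ → ℝ := fun n => Mx n - mn n with hosc
  have hosc_nonneg : ∀ n, 0 ≤ osc n := fun n => by
    have := hmM n; simp only [hosc]; linarith
  have hosc_anti : Antitone osc := by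
    intro a b hab
    have h1 := hMx_anti hab
    have h2 := hmn_mono hab
    simp only [hosc]
    linarith
  have hosc5 : ∀ n, osc (n+5) ≤ (9/10) * osc n := by
    intro n
    have h1 := hcontr n
    have h2 := hmn_mono (by omega : n ≤ n + 5)
    simp only [hosc]; linarith
  have hosc_pow : ∀ k r, osc (5*k+r) ≤ (9/10)^k * osc r := by
    intro k
    induction k with
    | zero => intro r; simp
    | succ k ih =>
      intro r
      have h1 : 5*(k+1)+r = (5*k+r)+5 := by ring
      rw [h1]
      calc osc ((5*k+r)+5) ≤ (9/10) * osc (5*k+r) := hosc5 _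
        _ ≤ (9/10) * ((9/10)^k * osc r) :=
            mul_le_mul_of_nonneg_left (ih r) (by norm_num)
        _ = (9/10)^(k+1) * osc r := by ring
  have hosc_bound : ∀ n, osc n ≤ (9/10)^(n/5) * osc 0 := by
    intro n
    have h1 : 5*(n/5) + n%5 = n := by omega
    calc osc n = osc (5*(n/5) + n%5) := by rw [h1]
      _ ≤ (9/10)^(n/5) * osc (n%5) := hosc_pow _ _
      _ ≤ (9/10)^(n/5) * osc 0 :=
          mul_le_mul_of_nonneg_left (hosc_anti (Nat.zero_le _)) (by positivity)
  have hosc_tendsto : Filter.Tendsto osc Filter.atTop (nhds 0) := by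
    have hpow : Filter.Tendsto (fun n : ℕ => (9/10:ℝ)^(n/5) * osc 0) Filter.atTop (nhds 0) := by
      have h1 : Filter.Tendsto (fun k : ℕ => (9/10:ℝ)^k) Filter.atTop (nhds 0) :=
        tendsto_pow_atTop_nhds_zero_of_lt_one (by norm_num) (by norm_num)
      have h2 : Filter.Tendsto (fun n : ℕ => n/5) Filter.atTop Filter.atTop := by
        apply Filter.tendsto_atTop_atTop.2
        intro b
        exact ⟨5*b, fun a ha => by omega⟩
      have := (h1.comp h2).mul_const (osc 0)
      simpa using this
    exact squeeze_zero hosc_nonneg hosc_bound hpow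
  have hbdd : BddAbove (Set.range mn) := by
    refine ⟨Mx 0, ?_⟩
    rintro x ⟨n, rfl⟩
    calc mn n ≤ Mx n := hmM n
      _ ≤ Mx 0 := hMx_anti (Nat.zero_le n)
  set C := ⨆ n, mn n with hC
  have hmnC : ∀ n, mn n ≤ C := fun n => le_ciSup hbdd n
  have hCMx : ∀ n, C ≤ Mx n := by
    intro n
    apply ciSup_le
    intro m
    rcases le_total m n with h | h
    · exact le_trans (hmn_mono h) (hmM n)
    · exact le_trans (hmM m) (hMx_anti h)
  refine ⟨C, ?_, hmnC 0⟩
  have habs : ∀ n, |q n - C| ≤ osc n := by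
    intro n
    rw [abs_le]
    have h1 := (hmle n).1
    have h2 := (hMge n).1
    have h3 := hmnC n
    have h4 := hCMx n
    constructor <;> simp only [hosc] <;> linarith
  have h5 : Filter.Tendsto (fun n => q n - C) Filter.atTop (nhds 0) :=
    squeeze_zero_norm habs hosc_tendsto
  have := h5.add_const C
  simpa using this

end Window

lemma slope_conv (l C S : ℝ) (q p : ℕ → ℝ)
    (hl0 : 0 < l) (hl1 : l < 1)
    (hqC : Filter.Tendsto q Filter.atTop (nhds C))
    (hp : ∀ n, p (n+3) = l * p (n+2) + (1-l) * p n + (1-l) * q n)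
    (hS : S * (3 - 2*l) = (1-l) * C) :
    Filter.Tendsto (fun n => p n / n) Filter.atTop (nhds S) := by
  set r : ℕ → ℝ := fun n => p n - S * n with hr
  have hrrec : ∀ n, r (n+3) = l * r (n+2) + (1-l) * r n + (1-l) * (q n - C) := by
    intro n
    simp only [hr]
    push_cast
    linear_combination (hp n) - hS
  set E : ℕ → ℝ := fun n => |q n - C| with hE
  have hE0 : ∀ n, 0 ≤ E n := fun n => abs_nonneg _
  have hEtend : Filter.Tendsto E Filter.atTop (nhds 0) := by
    have := hqC.sub_const C
    simpa [hE] using this.abs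
  set Rm : ℕ → ℝ := fun n => max (|r n|) (max (|r (n+1)|) (|r (n+2)|)) with hRm
  have hRmle : ∀ n, |r n| ≤ Rm n := fun n => le_max_left _ _
  have hRmstep : ∀ n, Rm (n+1) ≤ Rm n + E n := by
    intro n
    have h1 : |r (n+1)| ≤ Rm n := le_trans (le_max_left _ _) (le_max_right _ _)
    have h2 : |r (n+2)| ≤ Rm n := le_trans (le_max_right _ _) (le_max_right _ _)
    have h3 : |r (n+3)| ≤ Rm n + E n := by
      have := hrrec n
      have habs : |r (n+3)| ≤ l * |r (n+2)| + (1-l) * |r n| + (1-l) * E n := by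
        rw [this]
        calc |l * r (n+2) + (1-l) * r n + (1-l) * (q n - C)|
            ≤ |l * r (n+2) + (1-l) * r n| + |(1-l) * (q n - C)| := abs_add_le _ _
          _ ≤ |l * r (n+2)| + |(1-l) * r n| + |(1-l) * (q n - C)| := by
              linarith [abs_add_le (l * r (n+2)) ((1-l) * r n)]
          _ = l * |r (n+2)| + (1-l) * |r n| + (1-l) * E n := by
              rw [abs_mul, abs_mul, abs_mul, abs_of_pos hl0,
                abs_of_pos (by linarith : (0:ℝ) < 1 - l)]
      have hr0 : |r n| ≤ Rm n := hRmle n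
      nlinarith [hE0 n, mul_le_mul_of_nonneg_left h2 hl0.le,
        mul_le_mul_of_nonneg_left hr0 (by linarith : (0:ℝ) ≤ 1-l)]
    have he1 : n+1+1 = n+2 := by ring
    have he2 : n+1+2 = n+3 := by ring
    show max (|r (n+1)|) (max (|r (n+1+1)|) (|r (n+1+2)|)) ≤ _
    rw [he1, he2]
    have h0 := hE0 n
    exact max_le (by linarith) (max_le (by linarith) h3)
  have hRmsum : ∀ n, Rm n ≤ Rm 0 + ∑ k ∈ Finset.range n, E k := by
    intro n
    induction n with
    | zero => simp
    | succ n ih =>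
      rw [Finset.sum_range_succ]
      have := hRmstep n
      linarith
  have hrbound : ∀ n, |r n| ≤ Rm 0 + ∑ k ∈ Finset.range n, E k :=
    fun n => le_trans (hRmle n) (hRmsum n)
  have hcesaro : Filter.Tendsto (fun n : ℕ => (↑n)⁻¹ * ∑ k ∈ Finset.range n, E k)
      Filter.atTop (nhds 0) := by
    have := hEtend.cesaro
    simpa using this
  have hinv : Filter.Tendsto (fun n : ℕ => (n:ℝ)⁻¹ * Rm 0) Filter.atTop (nhds 0) := by
    have := tendsto_inv_atTop_nhds_zero_nat.mul_const (Rm 0)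
    simpa using this
  have hrn : Filter.Tendsto (fun n => r n / n) Filter.atTop (nhds 0) := by
    refine squeeze_zero_norm (a := fun n : ℕ => (n:ℝ)⁻¹ * Rm 0 + (↑n)⁻¹ * ∑ k ∈ Finset.range n, E k) ?_ ?_
    · intro n
      have h1 : ‖r n / n‖ = |r n| * (n:ℝ)⁻¹ := by
        rw [div_eq_mul_inv, norm_mul]
        simp [abs_of_nonneg]
      rw [h1]
      have h2 : (0:ℝ) ≤ (n:ℝ)⁻¹ := by positivity
      calc |r n| * (n:ℝ)⁻¹ ≤ (Rm 0 + ∑ k ∈ Finset.range n, E k) * (n:ℝ)⁻¹ :=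
            mul_le_mul_of_nonneg_right (hrbound n) h2
        _ = (n:ℝ)⁻¹ * Rm 0 + (↑n)⁻¹ * ∑ k ∈ Finset.range n, E k := by ring
    · have := hinv.add hcesaro
      simpa using this
  have heq : ∀ᶠ n : ℕ in Filter.atTop, S + r n / n = p n / n := by
    filter_upwards [Filter.eventually_ge_atTop 1] with n hn
    have hn0 : (n:ℝ) ≠ 0 := Nat.cast_ne_zero.mpr (by omega)
    simp only [hr]
    field_simp
    ring
  have := (hrn.const_add S).congr' heq
  simpa using this

lemma theta_spec : ∃ x : ℝ, ((1.46:ℝ) ≤ x ∧ x ≤ 1.47) ∧ x^3 = x^2 + 1 := by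
  have hcont : ContinuousOn (fun x : ℝ => x^3 - x^2 - 1) (Set.Icc 1.46 1.47) := by
    fun_prop
  have hsub := intermediate_value_Icc (by norm_num : (1.46:ℝ) ≤ 1.47) hcont
  have h0 : (0:ℝ) ∈ Set.Icc ((fun x : ℝ => x^3 - x^2 - 1) 1.46) ((fun x : ℝ => x^3 - x^2 - 1) 1.47) := by
    simp only [Set.mem_Icc]
    norm_num
  obtain ⟨x, hx, hfx⟩ := hsub h0
  refine ⟨x, ⟨hx.1, hx.2⟩, ?_⟩
  simp only at hfx
  linarith

noncomputable def θR : ℝ := Classical.choose theta_spec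

lemma θR_ge : (1.46:ℝ) ≤ θR := (Classical.choose_spec theta_spec).1.1
lemma θR_le : θR ≤ (1.47:ℝ) := (Classical.choose_spec theta_spec).1.2
lemma θR_cube : θR^3 = θR^2 + 1 := (Classical.choose_spec theta_spec).2
lemma θR_pos : (0:ℝ) < θR := lt_of_lt_of_le (by norm_num) θR_ge

lemma pers_div_helper (a b t c : ℝ) (ht : t ≠ 0) (hb : b ≠ 0) (hc : c ≠ 0) :
    (a/t * c⁻¹)/(b/t) = a/(c*b) := by
  field_simp

set_option maxHeartbeats 1000000 in
lemma persolus_density_limit_aux :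
    Filter.Tendsto (fun n : ℕ => (persolusBitsum n : ℝ) / (n * persolusCount n))
      Filter.atTop (nhds ((1 - 1/θR)/(3 - 2*(1/θR)))) := by
  have hθ := θR_cube
  have hθpos := θR_pos
  have hθge := θR_ge
  have hθle := θR_le
  have hl1 : (0.68:ℝ) ≤ 1/θR := by
    rw [le_div_iff₀ hθpos]; nlinarith
  have hl2 : 1/θR ≤ (0.685:ℝ) := by
    rw [div_le_iff₀ hθpos]; nlinarith
  have hml : 1 - 1/θR = 1/θR^3 := by
    rw [eq_div_iff (by positivity : θR^3 ≠ 0)]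
    field_simp
    nlinarith
  have hθn : ∀ n : ℕ, (θR:ℝ)^n ≠ 0 := fun n => pow_ne_zero n hθpos.ne'
  set q : ℕ → ℝ := fun n => (cnt 3 n : ℝ)/θR^n with hqdef
  set p : ℕ → ℝ := fun n => (bcnt 3 n : ℝ)/θR^n with hpdef
  have hqpos : ∀ n, 0 < q n := fun n => by
    have := cnt3_pos n
    have : (0:ℝ) < (cnt 3 n : ℝ) := by exact_mod_cast this
    positivity
  have hqrec : ∀ n, q (n+3) = (1/θR) * q (n+2) + (1-1/θR) * q n := by
    intro n
    have hc : ((cnt 3 (n+3)):ℝ) = (cnt 3 (n+2) : ℝ) + (cnt 3 n : ℝ) := by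
      rw [cnt3_rec n]; push_cast; ring
    rw [hml]
    show (cnt 3 (n+3):ℝ)/θR^(n+3) = (1/θR)*((cnt 3 (n+2):ℝ)/θR^(n+2)) + (1/θR^3)*((cnt 3 n:ℝ)/θR^n)
    have e1 : θR^(n+3) = θR^3 * θR^n := by rw [pow_add]; ring
    have e2 : θR^(n+2) = θR^2 * θR^n := by rw [pow_add]; ring
    rw [e1, e2, hc]
    have h2 : θR^2 ≠ 0 := by positivity
    have h3 : θR^3 ≠ 0 := by positivity
    field_simp
  have hprec : ∀ n, p (n+3) = (1/θR) * p (n+2) + (1-1/θR) * p n + (1-1/θR) * q n := by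
    intro n
    have hc : ((bcnt 3 (n+3)):ℝ) = (bcnt 3 (n+2) : ℝ) + (bcnt 3 n : ℝ) + (cnt 3 n : ℝ) := by
      rw [bcnt3_rec n]; push_cast; ring
    rw [hml]
    show (bcnt 3 (n+3):ℝ)/θR^(n+3)
      = (1/θR)*((bcnt 3 (n+2):ℝ)/θR^(n+2)) + (1/θR^3)*((bcnt 3 n:ℝ)/θR^n)
        + (1/θR^3)*((cnt 3 n:ℝ)/θR^n)
    have e1 : θR^(n+3) = θR^3 * θR^n := by rw [pow_add]; ring
    have e2 : θR^(n+2) = θR^2 * θR^n := by rw [pow_add]; ring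
    rw [e1, e2, hc]
    have h2 : θR^2 ≠ 0 := by positivity
    have h3 : θR^3 ≠ 0 := by positivity
    field_simp
  obtain ⟨C, hCt, hCge⟩ := window_conv (1/θR) q hl1 hl2 hqrec
  have hC0 : 0 < C :=
    lt_of_lt_of_le (lt_min (hqpos 0) (lt_min (hqpos 1) (hqpos 2))) hCge
  have hl0' : (0:ℝ) < 1/θR := by positivity
  have hl1'' : 1/θR < 1 := by rw [div_lt_one hθpos]; linarith
  have h32 : (0:ℝ) < 3 - 2*(1/θR) := by nlinarith
  set S : ℝ := (1-1/θR)*C/(3-2*(1/θR)) with hSdef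
  have hS : S * (3 - 2*(1/θR)) = (1-1/θR) * C := by
    rw [hSdef]; exact div_mul_cancel₀ _ h32.ne'
  have hpn : Filter.Tendsto (fun n => p n / n) Filter.atTop (nhds S) :=
    slope_conv (1/θR) C S q p hl0' hl1'' hCt hprec hS
  -- auxiliary limits
  have hq1 : Filter.Tendsto (fun n => q (n+1)) Filter.atTop (nhds C) :=
    (Filter.tendsto_add_atTop_iff_nat 1).2 hCt
  have hp1 : Filter.Tendsto (fun n => p (n+1) / (↑(n+1) : ℝ)) Filter.atTop (nhds S) :=
    (Filter.tendsto_add_atTop_iff_nat 1).2 hpn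
  have hinv3 : Filter.Tendsto (fun n : ℕ => ((n:ℝ)+3)⁻¹) Filter.atTop (nhds 0) := by
    apply Filter.Tendsto.inv_tendsto_atTop
    exact Filter.tendsto_atTop_add_const_right _ 3 tendsto_natCast_atTop_atTop
  have hrat1 : Filter.Tendsto (fun n : ℕ => (n:ℝ)*((n:ℝ)+3)⁻¹) Filter.atTop (nhds 1) := by
    have h := (hinv3.const_mul 3).const_sub 1
    simp only [mul_zero, sub_zero] at h
    apply h.congr
    intro n
    have hne : ((n:ℝ)+3) ≠ 0 := by positivity
    field_simp
    ring
  have hrat2 : Filter.Tendsto (fun n : ℕ => ((n:ℝ)+1)*((n:ℝ)+3)⁻¹) Filter.atTop (nhds 1) := by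
    have h := (hinv3.const_mul 2).const_sub 1
    simp only [mul_zero, sub_zero] at h
    apply h.congr
    intro n
    have hne : ((n:ℝ)+3) ≠ 0 := by positivity
    field_simp
    ring
  set A : ℕ → ℝ := fun n => q n * ((n:ℝ)+3)⁻¹ + (p n/(n:ℝ))*((n:ℝ)*((n:ℝ)+3)⁻¹)
      + θR*(p (n+1)/(↑(n+1):ℝ))*(((n:ℝ)+1)*((n:ℝ)+3)⁻¹) with hAdef
  set B : ℕ → ℝ := fun n => q n + θR * q (n+1) with hBdef
  have hAt : Filter.Tendsto A Filter.atTop (nhds (C*0 + S*1 + θR*S*1)) := by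
    apply Filter.Tendsto.add
    apply Filter.Tendsto.add
    · exact hCt.mul hinv3
    · exact hpn.mul hrat1
    · exact ((hp1.const_mul θR).mul hrat2)
  have hBt : Filter.Tendsto B Filter.atTop (nhds (C + θR * C)) :=
    hCt.add (hq1.const_mul θR)
  have hBne : C + θR * C ≠ 0 := by positivity
  have hABt := hAt.div hBt hBne
  have hval : (C*0 + S*1 + θR*S*1)/(C + θR * C) = (1 - 1/θR)/(3 - 2*(1/θR)) := by
    have h1 : C ≠ 0 := hC0.ne'
    have h2 : (1:ℝ) + θR ≠ 0 := by positivity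
    have e1 : (C*0 + S*1 + θR*S*1) = S*(1+θR) := by ring
    have e2 : C + θR*C = C*(1+θR) := by ring
    rw [e1, e2, mul_div_mul_right _ _ h2]
    have e3 : S = ((1-1/θR)/(3-2*(1/θR)))*C := by rw [hSdef]; ring
    rw [e3, mul_div_assoc, div_self h1, mul_one]
  rw [hval] at hABt
  have hev : ∀ᶠ n in Filter.atTop,
      A n / B n = (persolusBitsum (n+3) : ℝ) / ((↑(n+3):ℝ) * persolusCount (n+3)) := by
    filter_upwards [Filter.eventually_ge_atTop 1] with n hn
    have hn0 : ((n:ℝ)) ≠ 0 := Nat.cast_ne_zero.mpr (by omega)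
    have hn1 : ((n:ℝ)+1) ≠ 0 := by positivity
    have hn3 : ((n:ℝ)+3) ≠ 0 := by positivity
    have hden : ((cnt 3 n : ℝ) + (cnt 3 (n+1) : ℝ)) ≠ 0 := by
      have h1 : (0:ℝ) < (cnt 3 n : ℝ) := by exact_mod_cast cnt3_pos n
      have h2 : (0:ℝ) ≤ (cnt 3 (n+1) : ℝ) := by positivity
      positivity
    have hA' : A n = ((cnt 3 n : ℝ) + (bcnt 3 n : ℝ) + (bcnt 3 (n+1) : ℝ))/θR^n * ((n:ℝ)+3)⁻¹ := by
      simp only [hAdef, hqdef, hpdef]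
      have e1 : θR^(n+1) = θR * θR^n := by rw [pow_succ]; ring
      rw [e1]
      push_cast
      field_simp
    have hB' : B n = ((cnt 3 n : ℝ) + (cnt 3 (n+1) : ℝ))/θR^n := by
      simp only [hBdef, hqdef, hpdef]
      have e1 : θR^(n+1) = θR * θR^n := by rw [pow_succ]; ring
      rw [e1]
      field_simp
    rw [hA', hB', persolusBitsum_eq, bcnt0_eq, persolusCount_eq, cnt0_eq]
    push_cast
    rw [pers_div_helper _ _ _ _ (hθn n) hden hn3]
  have hfinal := hABt.congr' hev
  exact (Filter.tendsto_add_atTop_iff_nat 3).1 hfinal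

set_option maxHeartbeats 1000000 in
/-- The average density of 1s in a random persolus bitstring tends to the stated
cube-root closed form `(1/3)(1 - ((31+3√93)/1922)^{1/3} - ((31-3√93)/1922)^{1/3})`. -/
theorem persolus_density_limit :
    Filter.Tendsto (fun n : ℕ => (persolusBitsum n : ℝ) / (n * persolusCount n))
      Filter.atTop
      (nhds ((1 / 3) * (1 - ((31 + 3 * Real.sqrt 93) / 1922) ^ ((1 : ℝ) / 3)
        - ((31 - 3 * Real.sqrt 93) / 1922) ^ ((1 : ℝ) / 3)))) := by
  have haux := persolus_density_limit_aux
  have hθ := θR_cube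
  have hθpos := θR_pos
  have hθge := θR_ge
  have hθle := θR_le
  have hD0 : (0:ℝ) < θR^2+3 := by positivity
  have hne1 : (3:ℝ) - 2*(1/θR) ≠ 0 := by
    have : 1/θR < 1 := by rw [div_lt_one hθpos]; linarith
    have : 0 < 1/θR := by positivity
    intro h; nlinarith
  have hLeq : (1 - 1/θR)/(3 - 2*(1/θR)) = 1/(θR^2+3) := by
    rw [div_eq_div_iff hne1 hD0.ne']
    field_simp
    linear_combination hθ
  have hLroot : 31*(1/(θR^2+3))^3 - 31*(1/(θR^2+3))^2 + 10*(1/(θR^2+3)) - 1 = 0 := by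
    have h1 : (θR^2+3)^3 - 10*(θR^2+3)^2 + 31*(θR^2+3) - 31 = 0 := by
      linear_combination (θR^3+θR^2+1)*hθ
    have key : 31*(1/(θR^2+3))^3 - 31*(1/(θR^2+3))^2 + 10*(1/(θR^2+3)) - 1
        = -(((θR^2+3)^3 - 10*(θR^2+3)^2 + 31*(θR^2+3) - 31))/(θR^2+3)^3 := by
      field_simp
      ring
    rw [key, h1]
    simp
  have hL0 : (0:ℝ) ≤ 1/(θR^2+3) := by positivity
  have hL26 : 1/(θR^2+3) ≤ 0.26 := by
    rw [div_le_iff₀ hD0]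
    nlinarith
  -- the cube-root expression
  have hs0 : (0:ℝ) ≤ 93 := by norm_num
  have hs2 : Real.sqrt 93 ^ 2 = 93 := Real.sq_sqrt hs0
  have hs_ub : Real.sqrt 93 ≤ 9.7 := by
    calc Real.sqrt 93 ≤ Real.sqrt (9.7^2) := Real.sqrt_le_sqrt (by norm_num)
      _ = 9.7 := Real.sqrt_sq (by norm_num)
  have hs_lb : (9.64:ℝ) ≤ Real.sqrt 93 := by
    calc (9.64:ℝ) = Real.sqrt (9.64^2) := (Real.sqrt_sq (by norm_num)).symm
      _ ≤ Real.sqrt 93 := Real.sqrt_le_sqrt (by norm_num)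
  set s : ℝ := Real.sqrt 93 with hsdef
  have hApos : (0:ℝ) < (31+3*s)/1922 := by
    apply div_pos _ (by norm_num)
    linarith
  have hBpos : (0:ℝ) < (31-3*s)/1922 := by
    apply div_pos _ (by norm_num)
    linarith
  set u : ℝ := ((31+3*s)/1922) ^ ((1:ℝ)/3) with hudef
  set v : ℝ := ((31-3*s)/1922) ^ ((1:ℝ)/3) with hvdef
  have hu0 : 0 < u := Real.rpow_pos_of_pos hApos _
  have hv0 : 0 < v := Real.rpow_pos_of_pos hBpos _
  have hu3 : u^(3:ℕ) = (31+3*s)/1922 := by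
    rw [hudef, ← Real.rpow_natCast (((31+3*s)/1922)^((1:ℝ)/3)) 3, ← Real.rpow_mul hApos.le]
    norm_num
  have hv3 : v^(3:ℕ) = (31-3*s)/1922 := by
    rw [hvdef, ← Real.rpow_natCast (((31-3*s)/1922)^((1:ℝ)/3)) 3, ← Real.rpow_mul hBpos.le]
    norm_num
  have huv : u*v = 1/31 := by
    have h1 : u*v = (((31+3*s)/1922)*((31-3*s)/1922))^((1:ℝ)/3) :=
      (Real.mul_rpow hApos.le hBpos.le).symm
    have h2 : ((31+3*s)/1922)*((31-3*s)/1922) = ((1:ℝ)/31)^(3:ℕ) := by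
      linear_combination (-(9:ℝ)/3694084)*hs2
    rw [h1, h2, ← Real.rpow_natCast ((1:ℝ)/31) 3, ← Real.rpow_mul (by norm_num : (0:ℝ) ≤ 1/31)]
    norm_num
  have hu_lb : (0.3:ℝ) ≤ u := by
    nlinarith [hu3, hu0, hs_lb, mul_pos hu0 hu0]
  have hu_ub : u ≤ (0.4:ℝ) := by
    nlinarith [hu3, hu0, hs_ub, mul_pos hu0 hu0]
  have hv_ub : v ≤ (0.4:ℝ) := by
    nlinarith [hv3, hv0, hs_ub, hs_lb, mul_pos hv0 hv0]
  have hR0 : (0:ℝ) ≤ (1/3)*(1-u-v) := by linarith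
  have hR26 : (1/3)*(1-u-v) ≤ 0.26 := by linarith
  have hRroot : 31*((1/3)*(1-u-v))^3 - 31*((1/3)*(1-u-v))^2 + 10*((1/3)*(1-u-v)) - 1 = 0 := by
    linear_combination (-(31:ℝ)/27)*hu3 + (-(31:ℝ)/27)*hv3 + (-(31/9)*(u+v))*huv
  -- uniqueness of the root in [0, 0.26]
  set L : ℝ := 1/(θR^2+3) with hLdef
  set R : ℝ := (1/3)*(1-u-v) with hRdef
  have hfac : (R-L)*(31*(L^2+L*R+R^2) - 31*(L+R) + 10) = 0 := by
    linear_combination hRroot - hLroot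
  have hpos2 : 0 < 31*(L^2+L*R+R^2) - 31*(L+R) + 10 := by
    nlinarith [sq_nonneg (L-R), sq_nonneg (0.52-L-R), hL0, hL26, hR0, hR26]
  have hLR : L = R := by
    rcases mul_eq_zero.mp hfac with h | h
    · linarith
    · linarith
  have hvaleq : (1 - 1/θR)/(3 - 2*(1/θR)) = (1 / 3) * (1 - ((31 + 3 * Real.sqrt 93) / 1922) ^ ((1 : ℝ) / 3)
        - ((31 - 3 * Real.sqrt 93) / 1922) ^ ((1 : ℝ) / 3)) := by
    rw [hLeq, hLR]
  rwa [hvaleq] at haux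
end

section
/- For fixed i,j ≥ 1, the number f_n of binary strings of length n containing no run of i consecutive 1s and no run of j consecutive 0s satisfies ∑_{n≥0} f_n z^n = (1 - z^i - z^j + z^{i+j})/(1 - 2z + z^{i+1} + z^{j+1} - z^{i+j}) as formal power series. -/
/-- Number of bitstrings of length `n` with no run of `i` 1s and no run of `j` 0s. -/
noncomputable def noTwoRunsCount (i j n : ℕ) : ℕ :=
  Nat.card {f : Fin n → Bool // ¬ HasRun true i f ∧ ¬ HasRun false j f}

namespace NoTwoRuns

def V (p q : ℕ) (b : Bool) {n : ℕ} (f : Fin n → Bool) : Prop :=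
  ¬ HasRun b p f ∧ ¬ HasRun (!b) q f

def Ends (b : Bool) {n : ℕ} (f : Fin n → Bool) : Prop :=
  ∀ v : Fin n, (v : ℕ) + 1 = n → f v = b

def Trail (b : Bool) (k : ℕ) {n : ℕ} (f : Fin n → Bool) : Prop :=
  k ≤ n ∧ (∀ v : Fin n, n ≤ (v : ℕ) + k → f v = b) ∧
    (∀ v : Fin n, (v : ℕ) + k + 1 = n → f v = !b)

def pad {n : ℕ} (m : ℕ) (g : Fin n → Bool) (b : Bool) : Fin m → Bool :=
  fun v => if h : (v : ℕ) < n then g ⟨v, h⟩ else b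

def trunc {m : ℕ} (n : ℕ) (h : n ≤ m) (f : Fin m → Bool) : Fin n → Bool :=
  fun v => f ⟨v, by omega⟩

lemma pad_lt {n m : ℕ} (g : Fin n → Bool) (b : Bool) (v : ℕ) (hvm : v < m) (hvn : v < n) :
    pad m g b ⟨v, hvm⟩ = g ⟨v, hvn⟩ := dif_pos hvn

lemma pad_ge {n m : ℕ} (g : Fin n → Bool) (b : Bool) (v : ℕ) (hvm : v < m) (hvn : n ≤ v) :
    pad m g b ⟨v, hvm⟩ = b := dif_neg (not_lt.mpr hvn)

lemma run_trunc {n m : ℕ} (h : n ≤ m) {f : Fin m → Bool} {b' : Bool} {r : ℕ}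
    (hr : HasRun b' r (trunc n h f)) : HasRun b' r f := by
  obtain ⟨s, hs, hv⟩ := hr
  exact ⟨s, by omega, fun t ht => hv t ht⟩

lemma V_trunc {p q : ℕ} {b : Bool} {n m : ℕ} (h : n ≤ m) {f : Fin m → Bool}
    (hf : V p q b f) : V p q b (trunc n h f) :=
  ⟨fun hr => hf.1 (run_trunc h hr), fun hr => hf.2 (run_trunc h hr)⟩

lemma run_pad {n m : ℕ} (hnm : n ≤ m) {g : Fin n → Bool} {b b' : Bool} {r : ℕ} (hr : 1 ≤ r)
    (h : HasRun b' r (pad m g b)) :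
    HasRun b' r g ∨ (b' = b ∧ ∃ s, s + r ≤ m ∧ n < s + r ∧
      ∀ t, t < r → ∀ h' : s + t < n, g ⟨s + t, h'⟩ = b') := by
  obtain ⟨s, hs, hv⟩ := h
  by_cases hc : s + r ≤ n
  · left
    refine ⟨s, hc, fun t ht => ?_⟩
    have h1 := hv t ht
    rwa [pad_lt (m := m) g b (s + t) (by omega) (by omega)] at h1
  · right
    have hb : b' = b := by
      have h1 := hv (r - 1) (by omega)
      have h2 := pad_ge (m := m) g b (s + (r - 1)) (by omega) (by omega)
      exact h1.symm.trans h2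
    refine ⟨hb, s, hs, by omega, fun t ht h' => ?_⟩
    have h1 := hv t ht
    rwa [pad_lt (m := m) g b (s + t) (by omega) (by omega)] at h1


noncomputable def cnt (n : ℕ) (P : (Fin n → Bool) → Prop) : ℕ := Nat.card {f // P f}

lemma cnt_congr {n : ℕ} {P Q : (Fin n → Bool) → Prop} (h : ∀ f, P f ↔ Q f) :
    cnt n P = cnt n Q :=
  Nat.card_congr (Equiv.subtypeEquivRight h)

lemma cnt_split (n : ℕ) (P Q : (Fin n → Bool) → Prop) :
    cnt n P = cnt n (fun f => P f ∧ Q f) + cnt n (fun f => P f ∧ ¬ Q f) := by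
  classical
  rw [cnt, cnt, cnt, ← Nat.card_sum]
  refine Nat.card_congr ?_
  exact ((Equiv.sumCompl (fun x : {f // P f} => Q x.1)).symm.trans
    (Equiv.sumCongr (Equiv.subtypeSubtypeEquivSubtypeInter P Q)
      (Equiv.subtypeSubtypeEquivSubtypeInter P (fun f => ¬ Q f))))

lemma cnt_zero {n : ℕ} {P : (Fin n → Bool) → Prop} (h : ∀ f, ¬ P f) : cnt n P = 0 := by
  haveI : IsEmpty {f // P f} := ⟨fun x => h x.1 x.2⟩
  exact Nat.card_of_isEmpty

lemma cnt_nil {P : (Fin 0 → Bool) → Prop} (h : ∀ f, P f) : cnt 0 P = 1 := by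
  haveI : Unique {f : Fin 0 → Bool // P f} :=
    ⟨⟨⟨finZeroElim, h _⟩⟩, fun a => Subtype.ext (Subsingleton.elim _ _)⟩
  exact Nat.card_unique

section main
variable {p q : ℕ}

lemma card_trail (b : Bool) (hp : 1 ≤ p) (hq : 1 ≤ q) (n k : ℕ) (hk : k < p) :
    cnt (n + k) (fun f => V p q b f ∧ Trail b k f) =
      cnt n (fun g => V p q b g ∧ Ends (!b) g) := by
  have hnm : n ≤ n + k := by omega
  -- truncation is well-defined
  have hto : ∀ f : Fin (n + k) → Bool, V p q b f ∧ Trail b k f →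
      V p q b (trunc n hnm f) ∧ Ends (!b) (trunc n hnm f) := by
    rintro f ⟨hV, hT⟩
    refine ⟨V_trunc hnm hV, fun v hv => ?_⟩
    exact hT.2.2 ⟨v, by omega⟩ (by simp; omega)
  -- padding is well-defined
  have hinv : ∀ g : Fin n → Bool, V p q b g ∧ Ends (!b) g →
      V p q b (pad (n + k) g b) ∧ Trail b k (pad (n + k) g b) := by
    rintro g ⟨hV, hE⟩
    constructor
    · constructor
      · intro hr
        rcases run_pad hnm hp hr with h | ⟨hb, s, hs, hns, hval⟩
        · exact hV.1 h
        · -- run of b of length p sticking out; it must cover position n-1 whose value is !b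
          have hsn : s < n := by omega
          have h1 := hval (n - 1 - s) (by omega) (by omega)
          have h2 := hE ⟨s + (n - 1 - s), by omega⟩ (by simp; omega)
          rw [h1] at h2
          simp at h2
      · intro hr
        rcases run_pad hnm hq hr with h | ⟨hb, s, hs, hns, hval⟩
        · exact hV.2 h
        · simp at hb
    · refine ⟨by omega, fun v hv => ?_, fun v hv => ?_⟩
      · have := pad_ge (m := n + k) g b v v.isLt (by omega)
        simpa [Fin.eta] using this
      · have h1 := pad_lt (m := n + k) g b v v.isLt (by omega)
        have h2 := hE ⟨v, by omega⟩ (by simp; omega)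
        simpa [Fin.eta, h2] using h1
  refine Nat.card_congr
    { toFun := fun x => ⟨trunc n hnm x.1, hto x.1 x.2⟩
      invFun := fun y => ⟨pad (n + k) y.1 b, hinv y.1 y.2⟩
      left_inv := ?_
      right_inv := ?_ }
  · rintro ⟨f, hV, hT⟩
    apply Subtype.ext
    funext v
    by_cases hv : (v : ℕ) < n
    · have := pad_lt (m := n + k) (trunc n hnm f) b v v.isLt hv
      simpa [Fin.eta, trunc] using this
    · have h1 := pad_ge (m := n + k) (trunc n hnm f) b v v.isLt (by omega)
      have h2 := hT.2.1 v (by omega)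
      simpa [Fin.eta, h2] using h1
  · rintro ⟨g, hV, hE⟩
    apply Subtype.ext
    funext v
    have := pad_lt (m := n + k) g b v (by omega) v.isLt
    simpa [Fin.eta, trunc] using this


lemma card_ends (b : Bool) (hp : 1 ≤ p) (hq : 1 ≤ q) (n : ℕ) :
    cnt (n + 1) (fun f => V p q b f ∧ Ends b f) =
      cnt n (fun g => V p q b g ∧ ¬ Trail b (p - 1) g) := by
  have hnm : n ≤ n + 1 := by omega
  have hto : ∀ f : Fin (n + 1) → Bool, V p q b f ∧ Ends b f →
      V p q b (trunc n hnm f) ∧ ¬ Trail b (p - 1) (trunc n hnm f) := by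
    rintro f ⟨hV, hE⟩
    refine ⟨V_trunc hnm hV, fun hT => ?_⟩
    have hpn : p - 1 ≤ n := hT.1
    -- build a run of b of length p at the end of f
    refine hV.1 ⟨n + 1 - p, by omega, fun t ht => ?_⟩
    by_cases hc : n + 1 - p + t = n
    · exact hE ⟨n + 1 - p + t, by omega⟩ (by simp; omega)
    · have := hT.2.1 ⟨n + 1 - p + t, by omega⟩ (by simp; omega)
      exact this
  have hinv : ∀ g : Fin n → Bool, V p q b g ∧ ¬ Trail b (p - 1) g →
      V p q b (pad (n + 1) g b) ∧ Ends b (pad (n + 1) g b) := by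
    rintro g ⟨hV, hT⟩
    constructor
    · constructor
      · intro hr
        rcases run_pad hnm hp hr with h | ⟨hb, s, hs, hns, hval⟩
        · exact hV.1 h
        · -- s + p = n + 1; the last p - 1 entries of g are b
          have hs1 : s + p = n + 1 := by omega
          apply hT
          refine ⟨by omega, fun v hv => ?_, fun v hv => ?_⟩
          · have := hval ((v : ℕ) - s) (by omega) (by omega)
            have h2 : s + ((v : ℕ) - s) = (v : ℕ) := by omega
            rw [show (⟨s + ((v : ℕ) - s), by omega⟩ : Fin n) = v from Fin.ext h2] at this
            exact this
          · -- boundary: v = n - p; if g v = b we get a run of length p inside g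
            by_cases hgv : g v = b
            · exfalso
              refine hV.1 ⟨(v : ℕ), by omega, fun t ht => ?_⟩
              by_cases hc : t = 0
              · subst hc
                simpa [Fin.eta] using hgv
              · have := hval ((v : ℕ) + t - s) (by omega) (by omega)
                have h2 : s + ((v : ℕ) + t - s) = (v : ℕ) + t := by omega
                rw [show (⟨s + ((v : ℕ) + t - s), by omega⟩ : Fin n)
                    = ⟨(v : ℕ) + t, by omega⟩ from Fin.ext h2] at this
                exact this
            · cases b <;> cases hgv2 : g v <;> simp_all
      · intro hr
        rcases run_pad hnm hq hr with h | ⟨hb, s, hs, hns, hval⟩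
        · exact hV.2 h
        · simp at hb
    · intro v hv
      have := pad_ge (m := n + 1) g b v v.isLt (by omega)
      simpa [Fin.eta] using this
  refine Nat.card_congr
    { toFun := fun x => ⟨trunc n hnm x.1, hto x.1 x.2⟩
      invFun := fun y => ⟨pad (n + 1) y.1 b, hinv y.1 y.2⟩
      left_inv := ?_
      right_inv := ?_ }
  · rintro ⟨f, hV, hE⟩
    apply Subtype.ext
    funext v
    by_cases hv : (v : ℕ) < n
    · have := pad_lt (m := n + 1) (trunc n hnm f) b v v.isLt hv
      simpa [Fin.eta, trunc] using this
    · have h1 := pad_ge (m := n + 1) (trunc n hnm f) b v v.isLt (by omega)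
      have h2 := hE v (by omega)
      simpa [Fin.eta, h2] using h1
  · rintro ⟨g, hV, hT⟩
    apply Subtype.ext
    funext v
    have := pad_lt (m := n + 1) g b v (by omega) v.isLt
    simpa [Fin.eta, trunc] using this

end main

section counts

variable (i j : ℕ)

noncomputable def fc (n : ℕ) : ℕ := cnt n (fun f => V i j true f)
noncomputable def cc (n : ℕ) : ℕ := cnt n (fun f => V j i false f ∧ Ends false f)
noncomputable def dc (n : ℕ) : ℕ := cnt n (fun f => V i j true f ∧ Ends true f)
noncomputable def ec (n : ℕ) : ℕ := cnt n (fun f => V j i false f ∧ Trail false (j - 1) f)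
noncomputable def ec' (n : ℕ) : ℕ := cnt n (fun f => V i j true f ∧ Trail true (i - 1) f)

variable {i j}

lemma V_comm {n : ℕ} (f : Fin n → Bool) : V i j true f ↔ V j i false f :=
  ⟨fun h => ⟨h.2, h.1⟩, fun h => ⟨h.2, h.1⟩⟩

lemma V_nil (hi : 1 ≤ i) (hj : 1 ≤ j) (f : Fin 0 → Bool) : V i j true f := by
  constructor <;> rintro ⟨s, hs, -⟩ <;> omega

lemma fc_zero (hi : 1 ≤ i) (hj : 1 ≤ j) : fc i j 0 = 1 :=
  cnt_nil (fun f => V_nil hi hj f)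

lemma cc_zero (hi : 1 ≤ i) (hj : 1 ≤ j) : cc i j 0 = 1 :=
  cnt_nil (fun f => ⟨(V_comm f).1 (V_nil hi hj f), fun v => absurd v.2 (by omega)⟩)

lemma dc_zero (hi : 1 ≤ i) (hj : 1 ≤ j) : dc i j 0 = 1 :=
  cnt_nil (fun f => ⟨V_nil hi hj f, fun v => absurd v.2 (by omega)⟩)

lemma not_ends_true {n : ℕ} (f : Fin (n + 1) → Bool) :
    (V i j true f ∧ ¬ Ends true f) ↔ (V j i false f ∧ Ends false f) := by
  constructor
  · rintro ⟨hV, hE⟩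
    refine ⟨(V_comm f).1 hV, fun v hv => ?_⟩
    by_contra hfv
    apply hE
    intro w hw
    have hwv : w = v := Fin.ext (by omega)
    subst hwv
    simpa using hfv
  · rintro ⟨hV, hE⟩
    refine ⟨(V_comm f).2 hV, fun hT => ?_⟩
    have h1 := hE ⟨n, by omega⟩ (by simp)
    have h2 := hT ⟨n, by omega⟩ (by simp)
    rw [h1] at h2
    simp at h2

lemma fc_split (hi : 1 ≤ i) (hj : 1 ≤ j) (n : ℕ) :
    fc i j (n + 1) = cc i j (n + 1) + dc i j (n + 1) := by
  rw [fc, cnt_split (n + 1) _ (fun f => Ends true f), cc, dc]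
  rw [cnt_congr (fun f => not_ends_true f)]
  omega

lemma fc_eq_cc (hi : 1 ≤ i) (hj : 1 ≤ j) (n : ℕ) :
    fc i j n = cc i j (n + 1) + ec i j n := by
  rw [fc, cnt_congr (fun f => V_comm f), cnt_split n _ (fun f => Trail false (j - 1) f),
    cc, ec, card_ends false hj hi n]
  omega

lemma fc_eq_dc (hi : 1 ≤ i) (hj : 1 ≤ j) (n : ℕ) :
    fc i j n = dc i j (n + 1) + ec' i j n := by
  rw [fc, cnt_split n _ (fun f => Trail true (i - 1) f),
    dc, ec', card_ends true hi hj n]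
  omega

lemma ec_eq (hi : 1 ≤ i) (hj : 1 ≤ j) (m : ℕ) :
    ec i j (m + (j - 1)) = dc i j m := by
  rw [ec, card_trail false hj hi m (j - 1) (by omega), dc]
  exact cnt_congr (fun f => and_congr_left' (V_comm f).symm)

lemma ec'_eq (hi : 1 ≤ i) (hj : 1 ≤ j) (m : ℕ) :
    ec' i j (m + (i - 1)) = cc i j m := by
  rw [ec', card_trail true hi hj m (i - 1) (by omega), cc]
  exact cnt_congr (fun f => and_congr_left' (V_comm f))

lemma ec_zero {n : ℕ} (h : n < j - 1) : ec i j n = 0 :=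
  cnt_zero (fun f hf => by have := hf.2.1; omega)

lemma ec'_zero {n : ℕ} (h : n < i - 1) : ec' i j n = 0 :=
  cnt_zero (fun f hf => by have := hf.2.1; omega)

end counts
end NoTwoRuns

open NoTwoRuns

open PowerSeries in
theorem noTwoRunsCount_gf (i j : ℕ) (hi : 1 ≤ i) (hj : 1 ≤ j) :
    (PowerSeries.mk (fun n => (noTwoRunsCount i j n : ℤ))) *
        (1 - 2 * (X : ℤ⟦X⟧) + X ^ (i + 1) + X ^ (j + 1) - X ^ (i + j)) =
      1 - (X : ℤ⟦X⟧) ^ i - X ^ j + X ^ (i + j) := by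
  classical
  have hfc : ∀ n, noTwoRunsCount i j n = fc i j n := fun n => rfl
  set F : ℤ⟦X⟧ := PowerSeries.mk fun n => (noTwoRunsCount i j n : ℤ) with hFdef
  set C : ℤ⟦X⟧ := PowerSeries.mk fun n => (cc i j n : ℤ) with hCdef
  set D : ℤ⟦X⟧ := PowerSeries.mk fun n => (dc i j n : ℤ) with hDdef
  have h3 : F = C + D - 1 := by
    ext n
    rw [hFdef, hCdef, hDdef]
    simp only [map_sub, map_add, PowerSeries.coeff_mk, PowerSeries.coeff_one]
    cases n with
    | zero => simp [hfc, fc_zero hi hj, cc_zero hi hj, dc_zero hi hj]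
    | succ n =>
      rw [hfc, fc_split hi hj]
      push_cast
      simp
  have h1 : C = 1 + X * F - X ^ j * D := by
    ext n
    rw [hFdef, hCdef, hDdef, show (X : ℤ⟦X⟧) * (PowerSeries.mk fun n => (noTwoRunsCount i j n : ℤ))
        = (PowerSeries.mk fun n => (noTwoRunsCount i j n : ℤ)) * X ^ 1 by ring,
      mul_comm ((X : ℤ⟦X⟧) ^ j) _]
    simp only [map_sub, map_add, PowerSeries.coeff_one, coeff_mul_X_pow',
      PowerSeries.coeff_mk]
    cases n with
    | zero =>
      rw [if_neg (show ¬ (1:ℕ) ≤ 0 by omega), if_neg (show ¬ j ≤ 0 by omega)]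
      simp [hfc, cc_zero hi hj]
    | succ n =>
      rw [if_neg (by omega), if_pos (by omega)]
      have hec : ec i j n = if j ≤ n + 1 then dc i j (n + 1 - j) else 0 := by
        split_ifs with h
        · have hn : n = (n + 1 - j) + (j - 1) := by omega
          have h5 := ec_eq hi hj (n + 1 - j)
          rw [← hn] at h5
          exact h5
        · exact ec_zero (by omega)
      have h4 := fc_eq_cc hi hj n
      rw [hec] at h4
      rw [hfc, show n + 1 - 1 = n from rfl]
      push_cast [h4]
      split_ifs <;> push_cast <;> ring
  have h2 : D = 1 + X * F - X ^ i * C := by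
    ext n
    rw [hFdef, hCdef, hDdef, show (X : ℤ⟦X⟧) * (PowerSeries.mk fun n => (noTwoRunsCount i j n : ℤ))
        = (PowerSeries.mk fun n => (noTwoRunsCount i j n : ℤ)) * X ^ 1 by ring,
      mul_comm ((X : ℤ⟦X⟧) ^ i) _]
    simp only [map_sub, map_add, PowerSeries.coeff_one, coeff_mul_X_pow',
      PowerSeries.coeff_mk]
    cases n with
    | zero =>
      rw [if_neg (show ¬ (1:ℕ) ≤ 0 by omega), if_neg (show ¬ i ≤ 0 by omega)]
      simp [hfc, dc_zero hi hj]
    | succ n =>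
      rw [if_neg (by omega), if_pos (by omega)]
      have hec : ec' i j n = if i ≤ n + 1 then cc i j (n + 1 - i) else 0 := by
        split_ifs with h
        · have hn : n = (n + 1 - i) + (i - 1) := by omega
          have h5 := ec'_eq hi hj (n + 1 - i)
          rw [← hn] at h5
          exact h5
        · exact ec'_zero (by omega)
      have h4 := fc_eq_dc hi hj n
      rw [hec] at h4
      rw [hfc, show n + 1 - 1 = n from rfl]
      push_cast [h4]
      split_ifs <;> push_cast <;> ring
  linear_combination (1 - (X : ℤ⟦X⟧) ^ (i + j)) * h3 + (1 - (X : ℤ⟦X⟧) ^ i) * h1 +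
    (1 - (X : ℤ⟦X⟧) ^ j) * h2
end
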